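/- There are formulas φ and ψ in the language of set theory with two and three free variables respectively such that: φ defines a function from the class of all TCIs into the universe; ψ defines a function from the class {(𝔗, M) : 𝔗 a TCI and M ⊨* 𝔗} into the universe; φ and ψ are absolute for transitive models of ZFC; for each TCI 𝔗 the relation R_𝔗 := {(M, x) : ψ(𝔗, M, x)} is one-one; and for all 𝔗, M, x, ψ(𝔗, M, x) implies there is 𝓛 with φ(𝔗, 𝓛) and x ⊆ 𝓛. -/

import Mathlib

/-!
Common formalization layer for "Small extensions of set-theoretic universes".

We work with `ZFSet`, Mathlib's type of ZFC sets.  A "universe" `V` is a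
`ZFSet` which is a (countable) transitive model of ZFC, where satisfaction
of ZFC is spelled out via an explicit first-order syntax `Fm` for languages
whose symbols are named by ZFC sets, together with a Tarskian satisfaction
predicate `Sat`.  TCIs (theories with constraints in interpretation), their
models, the forcings `ℙ(𝔗)`, derivative forcings, generic filters, the
evaluation map `Eval^V`, local method definitions and the reducibility
relation `≤^M` are all defined below, following the paper.
-/

noncomputable section

namespace SmallExt

open Classical

attribute [local instance] Classical.propDecidable

instance : Nonempty ZFSet := ⟨∅⟩

/-! ### basic coding machinery -/

/-- Kuratowski ordered pair. -/
def opair (a b : ZFSet) : ZFSet := ZFSet.pair a b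

/-- First projection of a Kuratowski pair. -/
def zfst (x : ZFSet) : ZFSet := ZFSet.sUnion (ZFSet.sInter x)

/-- Second projection of a Kuratowski pair. -/
def zsnd (x : ZFSet) : ZFSet :=
  ZFSet.sUnion
    (ZFSet.sep (fun y => ZFSet.sUnion x ≠ ZFSet.sInter x → y ∉ ZFSet.sInter x) (ZFSet.sUnion x))

/-- The `n`-th von Neumann natural, as a ZFC set. -/
def natZ : ℕ → ZFSet
  | 0 => ∅
  | n + 1 => insert (natZ n) (natZ n)

/-- Internal coding of a finite list as an iterated pair (`[a] ↦ a`), so that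
`ztuple` of a list of length `n` is a member of the `n`-th cartesian power. -/
def ztuple : List ZFSet → ZFSet
  | [] => ∅
  | [a] => a
  | a :: b :: l => opair a (ztuple (b :: l))

/-- Internal coding of a finite list as an iterated pair, with end marker `∅`. -/
def zlist : List ZFSet → ZFSet
  | [] => ∅
  | a :: l => opair a (zlist l)

/-- `n`-th cartesian power of a ZFC set (with `z^1 = z`, as in the paper). -/
def ZPow (z : ZFSet) : ℕ → ZFSet
  | 0 => {∅}
  | 1 => z
  | n + 2 => ZFSet.prod z (ZPow z (n + 1))

/-- Decode an internal `n`-tuple into a list. -/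
def decodeTuple : ℕ → ZFSet → List ZFSet
  | 0, _ => []
  | 1, t => [t]
  | n + 2, t => zfst t :: decodeTuple (n + 1) (zsnd t)

/-- Image of a ZFC set under an arbitrary (classically definable) function. -/
def zimage (f : ZFSet → ZFSet) (x : ZFSet) : ZFSet :=
  @ZFSet.image f (Classical.allZFSetDefinable _) x

/-- The set of finite subsets of a ZFC set. -/
def finSubsets (A : ZFSet) : ZFSet :=
  ZFSet.sep (fun p => p.toSet.Finite) (ZFSet.powerset A)

/-- Application of a set-coded function (a set of ordered pairs) to an argument. -/
def iapp (I s : ZFSet) : ZFSet := Classical.epsilon fun v => opair s v ∈ I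

/-- `f` is a set-coded function with domain `d`. -/
def IsZFunc (f d : ZFSet) : Prop :=
  (∀ q ∈ f, ∃ s v, q = opair s v ∧ s ∈ d) ∧ ∀ s ∈ d, ∃! v, opair s v ∈ f

/-- `j` is (the code of) an injective function from `a` into `b`. -/
def ZInjFun (j a b : ZFSet) : Prop :=
  IsZFunc j a ∧ (∀ s ∈ a, iapp j s ∈ b) ∧
    ∀ s ∈ a, ∀ s' ∈ a, iapp j s = iapp j s' → s = s'

/-- Von Neumann ordinals: transitive sets of transitive sets. -/
def IsOrd (x : ZFSet) : Prop := x.IsTransitive ∧ ∀ y ∈ x, ZFSet.IsTransitive y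

/-- `t` is the transitive closure of `a`. -/
def IsTrclOf (a t : ZFSet) : Prop :=
  a ⊆ t ∧ t.IsTransitive ∧ ∀ u, a ⊆ u → u.IsTransitive → t ⊆ u

/-! ### first-order syntax over set-named signatures -/

/-- Terms: de Bruijn variables, set parameters, and applications of
function symbols (named by ZFC sets; constants are `0`-ary functions). -/
inductive Tm : Type 1
  | var : ℕ → Tm
  | param : ZFSet.{0} → Tm
  | func : ZFSet.{0} → (n : ℕ) → (Fin n → Tm) → Tm

/-- First-order formulas over set-named signatures (with equality). -/
inductive Fm : Type 1
  | rel : ZFSet.{0} → (n : ℕ) → (Fin n → Tm) → Fm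
  | eq : Tm → Tm → Fm
  | not : Fm → Fm
  | imp : Fm → Fm → Fm
  | all : Fm → Fm
  | ex : Fm → Fm

/-- Derived conjunction. -/
def Fm.and (f g : Fm) : Fm := Fm.not (Fm.imp f (Fm.not g))

/-- Derived disjunction. -/
def Fm.or (f g : Fm) : Fm := Fm.imp (Fm.not f) g

/-- Derived biconditional. -/
def Fm.iff (f g : Fm) : Fm := Fm.and (Fm.imp f g) (Fm.imp g f)

/-- Evaluation of terms. -/
def Tm.eval (fI : ZFSet → List ZFSet → ZFSet) (v : ℕ → ZFSet) : Tm → ZFSet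
  | Tm.var n => v n
  | Tm.param a => a
  | Tm.func s n a => fI s (List.ofFn fun i => Tm.eval fI v (a i))

/-- Prepend a value to a valuation (for quantifiers). -/
def vcons (z : ZFSet) (v : ℕ → ZFSet) : ℕ → ZFSet
  | 0 => z
  | n + 1 => v n

/-- Tarskian satisfaction, parametrized by a class domain `domP`, an
interpretation `rI` of the relation symbols and `fI` of the function symbols. -/
def Sat (domP : ZFSet → Prop) (rI : ZFSet → List ZFSet → Prop)
    (fI : ZFSet → List ZFSet → ZFSet) : Fm → (ℕ → ZFSet) → Prop
  | Fm.rel s n a, v => rI s (List.ofFn fun i => Tm.eval fI v (a i))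
  | Fm.eq t u, v => Tm.eval fI v t = Tm.eval fI v u
  | Fm.not f, v => ¬ Sat domP rI fI f v
  | Fm.imp f g, v => Sat domP rI fI f v → Sat domP rI fI g v
  | Fm.all f, v => ∀ z, domP z → Sat domP rI fI f (vcons z v)
  | Fm.ex f, v => ∃ z, domP z ∧ Sat domP rI fI f (vcons z v)

/-- Free variables of a term. -/
def Tm.free : Tm → Set ℕ
  | Tm.var n => {n}
  | Tm.param _ => ∅
  | Tm.func _ _ a => {m | ∃ i, m ∈ Tm.free (a i)}

/-- Free variables of a formula (de Bruijn). -/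
def Fm.free : Fm → Set ℕ
  | Fm.rel _ _ a => {m | ∃ i, m ∈ Tm.free (a i)}
  | Fm.eq t u => Tm.free t ∪ Tm.free u
  | Fm.not f => Fm.free f
  | Fm.imp f g => Fm.free f ∪ Fm.free g
  | Fm.all f => {m | m + 1 ∈ Fm.free f}
  | Fm.ex f => {m | m + 1 ∈ Fm.free f}

/-- Set parameters occurring in a term. -/
def Tm.paramSet : Tm → Set ZFSet
  | Tm.var _ => ∅
  | Tm.param a => {a}
  | Tm.func _ _ a => {b | ∃ i, b ∈ Tm.paramSet (a i)}

/-- Set parameters occurring in a formula. -/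
def Fm.paramSet : Fm → Set ZFSet
  | Fm.rel _ _ a => {b | ∃ i, b ∈ Tm.paramSet (a i)}
  | Fm.eq t u => Tm.paramSet t ∪ Tm.paramSet u
  | Fm.not f => Fm.paramSet f
  | Fm.imp f g => Fm.paramSet f ∪ Fm.paramSet g
  | Fm.all f => Fm.paramSet f
  | Fm.ex f => Fm.paramSet f

/-- Quantifier-free formulas. -/
def IsQF : Fm → Prop
  | Fm.rel _ _ _ => True
  | Fm.eq _ _ => True
  | Fm.not f => IsQF f
  | Fm.imp f g => IsQF f ∧ IsQF g
  | Fm.all _ => False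
  | Fm.ex _ => False

mutual
  /-- `Π_n` formulas (prenex, with possibly empty quantifier blocks). -/
  inductive IsPi : ℕ → Fm → Prop where
    | qf {f} : IsQF f → IsPi 0 f
    | ofSigma {n f} : IsSigma n f → IsPi (n + 1) f
    | all {n f} : IsPi (n + 1) f → IsPi (n + 1) (Fm.all f)

  /-- `Σ_n` formulas (prenex, with possibly empty quantifier blocks). -/
  inductive IsSigma : ℕ → Fm → Prop where
    | qf {f} : IsQF f → IsSigma 0 f
    | ofPi {n f} : IsPi n f → IsSigma (n + 1) f
    | ex {n f} : IsSigma (n + 1) f → IsSigma (n + 1) (Fm.ex f)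
end

/-! ### the language of set theory and ZFC -/

/-- The name of the membership relation symbol. -/
def memSym : ZFSet := natZ 0

/-- The standard interpretation of `∈`. -/
def memRel : ZFSet → List ZFSet → Prop :=
  fun s args => s = memSym ∧ ∃ a b, args = [a, b] ∧ a ∈ b

/-- Satisfaction in the ∈-structure with domain `M` (a ZFC set). -/
def SatV (M : ZFSet) (f : Fm) (v : ℕ → ZFSet) : Prop :=
  Sat (· ∈ M) memRel (fun _ _ => ∅) f v

/-- Satisfaction in the ambient (class-sized) ∈-structure. -/
def SatU (f : Fm) (v : ℕ → ZFSet) : Prop :=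
  Sat (fun _ => True) memRel (fun _ _ => ∅) f v

/-- Atomic membership formula between de Bruijn variables. -/
def mem2 (i j : ℕ) : Fm := Fm.rel memSym 2 ![Tm.var i, Tm.var j]

/-- Equality between de Bruijn variables. -/
def eq2 (i j : ℕ) : Fm := Fm.eq (Tm.var i) (Tm.var j)

/-- Terms that are plain variables or parameters. -/
def Tm.noFunc : Tm → Prop
  | Tm.var _ => True
  | Tm.param _ => True
  | Tm.func _ _ _ => False

/-- Formulas of the language of set theory (only `∈`, binary, no function
symbols; parameters allowed). -/
def Fm.memOnly : Fm → Prop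
  | Fm.rel s n a => s = memSym ∧ n = 2 ∧ ∀ i, Tm.noFunc (a i)
  | Fm.eq t u => Tm.noFunc t ∧ Tm.noFunc u
  | Fm.not f => Fm.memOnly f
  | Fm.imp f g => Fm.memOnly f ∧ Fm.memOnly g
  | Fm.all f => Fm.memOnly f
  | Fm.ex f => Fm.memOnly f

/-- Iterated universal closure. -/
def allClose : ℕ → Fm → Fm
  | 0, f => f
  | k + 1, f => allClose k (Fm.all f)

/-- Extensionality. -/
def extAx : Fm :=
  Fm.all (Fm.all (Fm.imp (Fm.all (Fm.iff (mem2 0 2) (mem2 0 1))) (eq2 1 0)))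

/-- Pairing. -/
def pairAx : Fm := Fm.all (Fm.all (Fm.ex (Fm.and (mem2 2 0) (mem2 1 0))))

/-- Union. -/
def unionAx : Fm :=
  Fm.all (Fm.ex (Fm.all (Fm.all (Fm.imp (Fm.and (mem2 1 0) (mem2 0 3)) (mem2 1 2)))))

/-- Power set. -/
def powAx : Fm :=
  Fm.all (Fm.ex (Fm.all (Fm.imp (Fm.all (Fm.imp (mem2 0 1) (mem2 0 3))) (mem2 0 1))))

/-- Infinity. -/
def infAx : Fm :=
  Fm.ex (Fm.and
    (Fm.ex (Fm.and (mem2 0 1) (Fm.all (Fm.not (mem2 0 1)))))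
    (Fm.all (Fm.imp (mem2 0 1)
      (Fm.ex (Fm.and (mem2 0 2) (Fm.and (mem2 1 0)
        (Fm.all (Fm.iff (mem2 0 1) (Fm.or (mem2 0 2) (eq2 0 2))))))))))

/-- Foundation. -/
def fundAx : Fm :=
  Fm.all (Fm.imp (Fm.ex (mem2 0 1))
    (Fm.ex (Fm.and (mem2 0 1) (Fm.all (Fm.imp (mem2 0 1) (Fm.not (mem2 0 2)))))))

/-- Choice (for families of nonempty pairwise disjoint sets). -/
def choiceAx : Fm :=
  Fm.all (Fm.imp
    (Fm.and
      (Fm.all (Fm.imp (mem2 0 1) (Fm.ex (mem2 0 1))))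
      (Fm.all (Fm.all (Fm.imp
        (Fm.and (mem2 1 2) (Fm.and (mem2 0 2) (Fm.ex (Fm.and (mem2 0 2) (mem2 0 1)))))
        (eq2 1 0)))))
    (Fm.ex (Fm.all (Fm.imp (mem2 0 2)
      (Fm.ex (Fm.and (mem2 0 1) (Fm.and (mem2 0 2)
        (Fm.all (Fm.imp (Fm.and (mem2 0 2) (mem2 0 3)) (eq2 0 1))))))))))

/-- Body of a separation instance: `∀x ∃s ∀z (z ∈ s ↔ z ∈ x ∧ φ)`,
where in `φ` the variable `0` is `z`, `2` is `x`, and `≥ 3` are parameters. -/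
def sepBody (φ : Fm) : Fm :=
  Fm.all (Fm.ex (Fm.all (Fm.iff (mem2 0 1) (Fm.and (mem2 0 2) φ))))

/-- Body of a collection instance: `∀a ∃b ∀x∈a (∃y φ → ∃y∈b φ)`,
where in `φ` the variable `0` is `y`, `1` is `x`, `3` is `a`, and `≥ 4` are parameters. -/
def repBody (φ : Fm) : Fm :=
  Fm.all (Fm.ex (Fm.all (Fm.imp (mem2 0 2)
    (Fm.imp (Fm.ex φ) (Fm.ex (Fm.and (mem2 0 2) φ))))))

/-- The ZFC axioms, as a set of sentences of the language of set theory. -/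
def ZFCax : Set Fm :=
  {extAx, pairAx, unionAx, powAx, infAx, fundAx, choiceAx} ∪
    {f | ∃ k φ, Fm.memOnly φ ∧ Fm.paramSet φ = ∅ ∧ 1 ∉ Fm.free φ ∧ f = allClose k (sepBody φ)} ∪
    {f | ∃ k φ, Fm.memOnly φ ∧ Fm.paramSet φ = ∅ ∧ 2 ∉ Fm.free φ ∧ f = allClose k (repBody φ)}

/-- `M` is an ∈-model of ZFC. -/
def SatZFC (M : ZFSet) : Prop := ∀ f ∈ ZFCax, SatV M f (fun _ => ∅)

/-- A transitive model of ZFC. -/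
def IsTransModel (M : ZFSet) : Prop := M.IsTransitive ∧ SatZFC M

/-- A countable transitive model of ZFC. -/
def IsCTM (M : ZFSet) : Prop := IsTransModel M ∧ M.toSet.Countable

/-- `W` is an outer model of `U`: both are CTMs, `U ⊆ W`, and they have
the same ordinals. -/
def OuterModel (U W : ZFSet) : Prop :=
  IsCTM U ∧ IsCTM W ∧ U ⊆ W ∧ ∀ y ∈ W, IsOrd y → y ∈ U

/-- `W = U[m]`: `W` is an outer model of `U` and the smallest CTM
containing `U` as a subset and `m` as an element. -/
def Generates (U m W : ZFSet) : Prop :=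
  OuterModel U W ∧ m ∈ W ∧ ∀ W', IsCTM W' → U ⊆ W' → m ∈ W' → W ⊆ W'

/-- `W` is a small extension of `U`. -/
def IsSmallExt (U W : ZFSet) : Prop :=
  OuterModel U W ∧ ∃ m ∈ W, ∀ W', IsCTM W' → U ⊆ W' → m ∈ W' → W ⊆ W'

/-- `k` is a cardinal from the point of view of the model `U`: an ordinal
with no `U`-internal injection into a smaller ordinal. -/
def IsCardinalIn (U k : ZFSet) : Prop :=
  k ∈ U ∧ IsOrd k ∧ ∀ b ∈ k, ¬ ∃ j ∈ U, ZInjFun j k b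

end SmallExt
namespace SmallExt

attribute [local instance] Classical.propDecidable

/-! ### Theories with constraints in interpretation (TCIs) -/

/-- Coding of terms as ZFC sets. -/
def TmCode : Tm → ZFSet
  | Tm.var n => opair (natZ 0) (natZ n)
  | Tm.param a => opair (natZ 1) a
  | Tm.func s n a => opair (natZ 2) (opair s (zlist (List.ofFn fun i => TmCode (a i))))

/-- Coding of formulas as ZFC sets (the code of `¬ f` is `⟨2, code f⟩`). -/
def FmCode : Fm → ZFSet
  | Fm.rel s n a => opair (natZ 0) (opair s (zlist (List.ofFn fun i => TmCode (a i))))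
  | Fm.eq t u => opair (natZ 1) (opair (TmCode t) (TmCode u))
  | Fm.not f => opair (natZ 2) (FmCode f)
  | Fm.imp f g => opair (natZ 3) (opair (FmCode f) (FmCode g))
  | Fm.all f => opair (natZ 4) (FmCode f)
  | Fm.ex f => opair (natZ 5) (FmCode f)

/-- The first component of a TCI `⟨T, σ, U̇, ϑ⟩`: its theory. -/
def tciT (x : ZFSet) : ZFSet := zfst x

/-- The signature `σ` of a TCI. -/
def tciSig (x : ZFSet) : ZFSet := zfst (zsnd x)

/-- The distinguished unary relation symbol `U̇` of a TCI. -/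
def tciUdot (x : ZFSet) : ZFSet := zfst (zsnd (zsnd x))

/-- The interpretation constraint map `ϑ` of a TCI. -/
def tciTheta (x : ZFSet) : ZFSet := zsnd (zsnd (zsnd x))

/-- Symbols are coded as `⟨kind, ⟨arity, name⟩⟩` with kind `0` (relation),
`1` (function) or `2` (constant). -/
def symKind (s : ZFSet) : ZFSet := zfst s

/-- The (internal) arity of a symbol. -/
def symArity (s : ZFSet) : ZFSet := zfst (zsnd s)

/-- A well-formed symbol. -/
def IsSymbol (s : ZFSet) : Prop :=
  ∃ k a nm, s = opair k (opair a nm) ∧ (k = natZ 0 ∨ k = natZ 1 ∨ k = natZ 2) ∧ ∃ n : ℕ, a = natZ n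

/-- Decode an internal von Neumann natural. -/
def zToNat (a : ZFSet) : ℕ := if h : ∃ n, natZ n = a then h.choose else 0

/-- The arity of a symbol, as a natural number. -/
def arityOf (s : ZFSet) : ℕ := zToNat (symArity s)

/-- A term uses only symbols of the signature `σ` (with correct kinds and
arities) and no parameters. -/
def Tm.usesSig (σ : ZFSet) : Tm → Prop
  | Tm.var _ => True
  | Tm.param _ => False
  | Tm.func s n a => s ∈ σ ∧
      ((symKind s = natZ 1 ∧ symArity s = natZ n) ∨ (symKind s = natZ 2 ∧ n = 0)) ∧
      ∀ i, Tm.usesSig σ (a i)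

/-- A formula over the signature `σ` (no parameters). -/
def Fm.usesSig (σ : ZFSet) : Fm → Prop
  | Fm.rel s n a => s ∈ σ ∧ symKind s = natZ 0 ∧ symArity s = natZ n ∧ ∀ i, Tm.usesSig σ (a i)
  | Fm.eq t u => Tm.usesSig σ t ∧ Tm.usesSig σ u
  | Fm.not f => Fm.usesSig σ f
  | Fm.imp f g => Fm.usesSig σ f ∧ Fm.usesSig σ g
  | Fm.all f => Fm.usesSig σ f
  | Fm.ex f => Fm.usesSig σ f

/-- Same as `Fm.usesSig` but allowing set parameters (used for literals
with parameters). -/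
def Tm.usesSigP (σ : ZFSet) : Tm → Prop
  | Tm.var _ => True
  | Tm.param _ => True
  | Tm.func s n a => s ∈ σ ∧
      ((symKind s = natZ 1 ∧ symArity s = natZ n) ∨ (symKind s = natZ 2 ∧ n = 0)) ∧
      ∀ i, Tm.usesSigP σ (a i)

/-- A formula over the signature `σ`, allowing set parameters. -/
def Fm.usesSigP (σ : ZFSet) : Fm → Prop
  | Fm.rel s n a => s ∈ σ ∧ symKind s = natZ 0 ∧ symArity s = natZ n ∧ ∀ i, Tm.usesSigP σ (a i)
  | Fm.eq t u => Tm.usesSigP σ t ∧ Tm.usesSigP σ u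
  | Fm.not f => Fm.usesSigP σ f
  | Fm.imp f g => Fm.usesSigP σ f ∧ Fm.usesSigP σ g
  | Fm.all f => Fm.usesSigP σ f
  | Fm.ex f => Fm.usesSigP σ f

/-- Atomic formulas. -/
def Fm.isAtom : Fm → Prop
  | Fm.rel _ _ _ => True
  | Fm.eq _ _ => True
  | _ => False

/-- `x` is (the code of) a theory with constraints in interpretation:
a tuple `⟨T, σ, U̇, ϑ⟩` where `T` is a set of (codes of) first-order
sentences over `σ`, `U̇` is a unary relation symbol not in `σ`, and `ϑ`
maps each symbol of `σ ∪ {U̇}` to a pair `(y, i)` with `i ∈ {0, 1}` and `y`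
included in a finite cartesian power of the first component `z` of `ϑ(U̇)`,
with the disjointness conditions on the powers of `z` from the paper. -/
def IsTCI (x : ZFSet) : Prop :=
  x = opair (tciT x) (opair (tciSig x) (opair (tciUdot x) (tciTheta x))) ∧
  (∀ s ∈ tciSig x, IsSymbol s) ∧
  IsSymbol (tciUdot x) ∧ symKind (tciUdot x) = natZ 0 ∧ symArity (tciUdot x) = natZ 1 ∧
  tciUdot x ∉ tciSig x ∧
  IsZFunc (tciTheta x) (insert (tciUdot x) (tciSig x)) ∧
  (∀ s ∈ insert (tciUdot x) (tciSig x),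
    ∃ y i, iapp (tciTheta x) s = opair y i ∧ (i = natZ 0 ∨ i = natZ 1) ∧
      ∃ n : ℕ, y ⊆ ZPow (zfst (iapp (tciTheta x) (tciUdot x))) n) ∧
  (∀ n : ℕ, 1 < n →
    zfst (iapp (tciTheta x) (tciUdot x)) ∩
      ZPow (zfst (iapp (tciTheta x) (tciUdot x))) n = ∅) ∧
  (∀ m n : ℕ, 1 < m → m < n →
    ZPow (zfst (iapp (tciTheta x) (tciUdot x))) m ∩
      ZPow (zfst (iapp (tciTheta x) (tciUdot x))) n = ∅) ∧
  (∀ c ∈ tciT x, ∃ f : Fm, FmCode f = c ∧ Fm.free f = ∅ ∧ Fm.usesSig (tciSig x) f)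

/-- Satisfaction in a coded structure `M = ⟨U, I⟩`: relation symbols are
interpreted by `I` via internal tuples, function and constant symbols by the
(graph) values recorded in `I`. -/
def SatStr (M : ZFSet) (f : Fm) : Prop :=
  Sat (· ∈ zfst M) (fun s args => ztuple args ∈ iapp (zsnd M) s)
    (fun s args => if args = [] then iapp (zsnd M) s
      else Classical.epsilon fun b => ztuple (args ++ [b]) ∈ iapp (zsnd M) s)
    f (fun _ => ∅)

/-- The modelling relation `M ⊨* 𝔗` between coded structures and TCIs. -/
def ModelsTCI (M x : ZFSet) : Prop :=
  IsTCI x ∧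
  M = opair (zfst M) (zsnd M) ∧
  IsZFunc (zsnd M) (tciSig x) ∧
  -- the constraint on the universe
  (∀ y i, iapp (tciTheta x) (tciUdot x) = opair y i →
    (i = natZ 0 → zfst M ⊆ y) ∧ (i = natZ 1 → zfst M = y)) ∧
  -- the constraints on the symbols of the signature
  (∀ s ∈ tciSig x, ∀ y i, iapp (tciTheta x) s = opair y i →
    (symKind s = natZ 0 →
      (i = natZ 0 → iapp (zsnd M) s ⊆ y ∩ ZPow (zfst M) (arityOf s)) ∧
      (i = natZ 1 → iapp (zsnd M) s = y ∩ ZPow (zfst M) (arityOf s))) ∧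
    (symKind s = natZ 1 →
      (∀ args : List ZFSet, args.length = arityOf s → (∀ a ∈ args, a ∈ zfst M) →
        ∃! b, b ∈ zfst M ∧ ztuple (args ++ [b]) ∈ iapp (zsnd M) s) ∧
      (i = natZ 0 → iapp (zsnd M) s ⊆ y ∩ ZPow (zfst M) (arityOf s + 1)) ∧
      (i = natZ 1 → iapp (zsnd M) s = y ∩ ZPow (zfst M) (arityOf s + 1))) ∧
    (symKind s = natZ 2 → iapp (zsnd M) s ∈ y ∧ iapp (zsnd M) s ∈ zfst M)) ∧
  -- `M` satisfies the theory
  (∀ c ∈ tciT x, ∀ f : Fm, FmCode f = c → SatStr M f)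

/-- A `Π_n` TCI: one whose theory contains only `Π_n` sentences. -/
def IsPiTCI (n : ℕ) (x : ZFSet) : Prop :=
  IsTCI x ∧ ∀ c ∈ tciT x, ∃ f : Fm, FmCode f = c ∧ IsPi n f

/-- A `Σ_n` TCI: one whose theory contains only `Σ_n` sentences. -/
def IsSigmaTCI (n : ℕ) (x : ZFSet) : Prop :=
  IsTCI x ∧ ∀ c ∈ tciT x, ∃ f : Fm, FmCode f = c ∧ IsSigma n f

/-- A TCI in `V` is consistent iff it has a model in some outer model of `V`. -/
def ConsistentTCI (V x : ZFSet) : Prop :=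
  ∃ W M, OuterModel V W ∧ M ∈ W ∧ ModelsTCI M x

/-! ### the language fragment `𝓛_𝔗` and the diagram `Σ(𝔗, M)` -/

/-- The set of codes of atomic sentences (with parameters) associated to a
symbol `s` of a TCI `x`, as in the proof of Proposition 3.22 of the paper. -/
def codesFor (x s : ZFSet) : ZFSet :=
  if symKind s = natZ 0 then
    zimage (fun t => FmCode (Fm.rel s (arityOf s)
      fun i => Tm.param ((decodeTuple (arityOf s) t).getD i ∅)))
      (zfst (iapp (tciTheta x) s))
  else if symKind s = natZ 1 then
    zimage (fun t => FmCode (Fm.eq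
      (Tm.func s (arityOf s) fun i => Tm.param ((decodeTuple (arityOf s + 1) t).getD i ∅))
      (Tm.param ((decodeTuple (arityOf s + 1) t).getD (arityOf s) ∅))))
      (zfst (iapp (tciTheta x) s))
  else
    zimage (fun a => FmCode (Fm.eq (Tm.func s 0 Fin.elim0) (Tm.param a)))
      (zfst (iapp (tciTheta x) s))

/-- The atomic sentences of `𝓛_𝔗`. -/
def LLbase (x : ZFSet) : ZFSet :=
  ZFSet.sUnion (zimage (fun s => codesFor x s) (insert (tciUdot x) (tciSig x)))

/-- The language fragment `𝓛_𝔗`: atomic sentences with parameters, closed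
under negation. -/
def LL (x : ZFSet) : ZFSet :=
  LLbase x ∪ zimage (fun t => opair (natZ 2) t) (LLbase x)

/-- A literal of `𝓛_𝔗` true in the structure `M` (with `U̇` interpreted as
the domain of `M`). -/
def LitTrue (x M : ZFSet) (f : Fm) : Prop :=
  (∃ a, f = Fm.rel (tciUdot x) 1 (fun _ => Tm.param a) ∧ a ∈ zfst M) ∨
  (∃ a, f = Fm.not (Fm.rel (tciUdot x) 1 (fun _ => Tm.param a)) ∧ a ∉ zfst M) ∨
  (∃ g, (f = g ∨ f = Fm.not g) ∧ Fm.isAtom g ∧ Fm.usesSigP (tciSig x) g ∧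
    (∀ a ∈ Fm.paramSet g, a ∈ zfst M) ∧
    (f = g → SatStr M g) ∧ (f = Fm.not g → ¬ SatStr M g))

/-- The `𝔗`-specific atomic diagram `Σ(𝔗, M)` of a model `M` of `𝔗`. -/
def SigmaSet (x M : ZFSet) : ZFSet :=
  ZFSet.sep (fun c => ∃ f : Fm, FmCode f = c ∧ LitTrue x M f) (LL x)

/-! ### forcing notions and generic filters -/

/-- A forcing notion coded as a pair `⟨P, ≤⟩` of a set of conditions and a
partial order (a set of Kuratowski pairs). -/
def IsForcing (P : ZFSet) : Prop :=
  P = opair (zfst P) (zsnd P) ∧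
  (∀ q ∈ zsnd P, ∃ a ∈ zfst P, ∃ b ∈ zfst P, q = opair a b) ∧
  (∀ a ∈ zfst P, opair a a ∈ zsnd P) ∧
  (∀ a b c : ZFSet, opair a b ∈ zsnd P → opair b c ∈ zsnd P → opair a c ∈ zsnd P) ∧
  (∀ a b : ZFSet, opair a b ∈ zsnd P → opair b a ∈ zsnd P → a = b)

/-- `a ≤ b` in the coded forcing `P` (`a` extends, i.e. is stronger than, `b`). -/
def ple (P a b : ZFSet) : Prop := opair a b ∈ zsnd P

/-- `g` is a filter on the coded forcing `P`. -/
def IsFilterOn (P g : ZFSet) : Prop :=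
  g ⊆ zfst P ∧
  (∀ p ∈ g, ∀ q ∈ zfst P, ple P p q → q ∈ g) ∧
  (∀ p ∈ g, ∀ q ∈ g, ∃ r ∈ g, ple P r p ∧ ple P r q)

/-- `D` is a dense subset of the coded forcing `P`. -/
def IsDenseIn (P D : ZFSet) : Prop :=
  D ⊆ zfst P ∧ ∀ p ∈ zfst P, ∃ q ∈ D, ple P q p

/-- `g` is a `P`-generic filter over `V`: a filter on `P` meeting all dense
subsets of `P` lying in `V`. -/
def GenericFilterOver (V P g : ZFSet) : Prop :=
  IsFilterOn P g ∧ ∀ D ∈ V, IsDenseIn P D → ∃ q ∈ g, q ∈ D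

/-- `p` is an atom of the coded forcing `P`: any two extensions of `p`
are compatible. -/
def PAtom (P p : ZFSet) : Prop :=
  p ∈ zfst P ∧ ∀ q₁ ∈ zfst P, ∀ q₂ ∈ zfst P, ple P q₁ p → ple P q₂ p →
    ∃ r ∈ zfst P, ple P r q₁ ∧ ple P r q₂

/-- An atomless forcing notion. -/
def Atomless (P : ZFSet) : Prop := ∀ p ∈ zfst P, ¬ PAtom P p

/-- `g_p(ℙ) = {q ∈ P : q` is compatible with `p}`. -/
def gpSet (P p : ZFSet) : ZFSet :=
  ZFSet.sep (fun q => ∃ r ∈ zfst P, ple P r q ∧ ple P r p) (zfst P)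

/-- The reverse-inclusion order on a set `p` of conditions, as a set of pairs. -/
def supsetOrder (p : ZFSet) : ZFSet :=
  ZFSet.sep (fun q => ∃ a ∈ p, ∃ b ∈ p, q = opair a b ∧ b ⊆ a) (ZFSet.prod p p)

/-! ### the forcings `ℙ(𝔗)` and their derivatives -/

/-- `P(𝔗)`: finite subsets of `𝓛_𝔗` included in `Σ(𝔗, M)` for some model
`M` of `𝔗` in some outer model of `V`. -/
def PT (V x : ZFSet) : ZFSet :=
  ZFSet.sep
    (fun p => ∃ W M, OuterModel V W ∧ M ∈ W ∧ ModelsTCI M x ∧ p ⊆ SigmaSet x M)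
    (finSubsets (LL x))

/-- The forcing notion `ℙ(𝔗) = (P(𝔗), ⊇)`. -/
def Pforcing (V x : ZFSet) : ZFSet := opair (PT V x) (supsetOrder (PT V x))

/-- `q` is an atom of a `⊇`-ordered set `P` of conditions. -/
def SupAtomIn (P q : ZFSet) : Prop :=
  q ∈ P ∧ ∀ q₁ ∈ P, ∀ q₂ ∈ P, q ⊆ q₁ → q ⊆ q₂ → ∃ r ∈ P, q₁ ⊆ r ∧ q₂ ⊆ r

/-- The derivative forcings `P(𝔗)^{(α)}`: conditions certified by the diagram
of a model of `𝔗` avoiding all atoms of all earlier stages (stage `0` is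
`P(𝔗)` itself). -/
def PTa (V x : ZFSet) : Ordinal.{1} → ZFSet :=
  WellFounded.fix wellFounded_lt fun α rec =>
    ZFSet.sep
      (fun p => ∃ W M, OuterModel V W ∧ M ∈ W ∧ ModelsTCI M x ∧ p ⊆ SigmaSet x M ∧
        ∀ β, ∀ h : β < α, ∀ q, SupAtomIn (rec β h) q → ¬ q ⊆ SigmaSet x M)
      (finSubsets (LL x))

/-- The ordinal `|[𝓛_𝔗]^{<ω}|⁺`, bounding the derivative process. -/
def cardBound (x : ZFSet) : Ordinal.{1} :=
  (Order.succ (Cardinal.mk (finSubsets (LL x)).toSet)).ord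

/-- The fixed point `P(𝔗)^⊤` of the derivative process. -/
def PTtopSet (V x : ZFSet) : ZFSet :=
  PTa V x (sInf {α : Ordinal.{1} | PTa V x α = PTa V x (Order.succ α)})

/-- The forcing notion `ℙ(𝔗)^⊤`. -/
def PtopForcing (V x : ZFSet) : ZFSet :=
  opair (PTtopSet V x) (supsetOrder (PTtopSet V x))

/-- `M` is an almost finitely determined model of `𝔗`: `p ⊆ Σ(𝔗, M)` for
some atom `p` of some derivative forcing `ℙ(𝔗)^{(α)}`, `α < |[𝓛_𝔗]^{<ω}|⁺`. -/
def AlmostFinDet (V x M : ZFSet) : Prop :=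
  ModelsTCI M x ∧ ∃ α : Ordinal.{1}, α < cardBound x ∧
    ∃ p, SupAtomIn (PTa V x α) p ∧ p ⊆ SigmaSet x M

/-- All models of `𝔗` in outer models of `V` are almost finitely determined. -/
def AllAFD (V x : ZFSet) : Prop :=
  ∀ W M, OuterModel V W → M ∈ W → ModelsTCI M x → AlmostFinDet V x M

/-! ### the TCI `𝔗(ℙ)` of a forcing notion -/

/-- The symbol `≤̇` (binary relation). -/
def leSym : ZFSet := opair (natZ 0) (opair (natZ 2) (natZ 0))

/-- The symbol `Ġ` (unary relation) for the generic filter. -/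
def gSym : ZFSet := opair (natZ 0) (opair (natZ 1) (natZ 1))

/-- The symbol `Ḋ` (unary relation) associated to the dense set `D`. -/
def dSym (D : ZFSet) : ZFSet := opair (natZ 0) (opair (natZ 1) (opair (natZ 2) D))

/-- The distinguished symbol `U̇` used for `𝔗(ℙ)` and `𝔗_s`. -/
def udSym : ZFSet := opair (natZ 0) (opair (natZ 1) (natZ 3))

/-- The set of dense subsets of a coded forcing notion `P`. -/
def denseSets (P : ZFSet) : ZFSet :=
  ZFSet.sep (fun D => ∀ p ∈ zfst P, ∃ q ∈ D, ple P q p) (ZFSet.powerset (zfst P))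

/-- `Ġ(i)` as a formula. -/
def relG (i : ℕ) : Fm := Fm.rel gSym 1 (fun _ => Tm.var i)

/-- `i ≤̇ j` as a formula. -/
def relLe (i j : ℕ) : Fm := Fm.rel leSym 2 ![Tm.var i, Tm.var j]

/-- The sentences of `𝔗(ℙ)`: `Ġ` is a filter meeting each dense set. -/
def TofPTheory (P : ZFSet) : ZFSet :=
  insert (FmCode (Fm.all (Fm.all (Fm.ex (Fm.imp (Fm.and (relG 2) (relG 1))
      (Fm.and (relG 0) (Fm.and (relLe 0 2) (relLe 0 1))))))))
    (insert (FmCode (Fm.all (Fm.all (Fm.imp (Fm.and (relLe 1 0) (relG 1)) (relG 0)))))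
      (zimage (fun D => FmCode (Fm.ex (Fm.and (relG 0) (Fm.rel (dSym D) 1 (fun _ => Tm.var 0)))))
        (denseSets P)))

/-- The constraint map of `𝔗(ℙ)`. -/
def TofPTheta (P : ZFSet) : ZFSet :=
  insert (opair udSym (opair (zfst P) (natZ 1)))
    (insert (opair leSym (opair (zsnd P) (natZ 1)))
      (insert (opair gSym (opair (zfst P) (natZ 0)))
        (zimage (fun D => opair (dSym D) (opair D (natZ 1))) (denseSets P))))

/-- The `Π₂` TCI `𝔗(ℙ)` whose models (in outer models of `V`) are exactly
the `ℙ`-generic filters over `V`. -/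
def TofP (P : ZFSet) : ZFSet :=
  opair (TofPTheory P)
    (opair (insert leSym (insert gSym (zimage dSym (denseSets P))))
      (opair udSym (TofPTheta P)))

/-! ### evaluations, local method definitions and `≤^M` -/

/-- `Eval^V(𝔗) = {V[M] : M ⊨* 𝔗` in some outer model of `V}`. -/
def EvalT (V x : ZFSet) : Set ZFSet :=
  {W' | ∃ W M, OuterModel V W ∧ M ∈ W ∧ ModelsTCI M x ∧ Generates V M W'}

/-- A valuation loading one set at variable `0`. -/
def vone (a : ZFSet) : ℕ → ZFSet := fun n => if n = 0 then a else ∅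

/-- A valuation loading two sets at variables `0`, `1`. -/
def vtwo (a b : ZFSet) : ℕ → ZFSet := fun n => if n = 0 then a else if n = 1 then b else ∅

/-- A valuation loading three sets at variables `0`, `1`, `2`. -/
def vthree (a b c : ZFSet) : ℕ → ZFSet :=
  fun n => if n = 0 then a else if n = 1 then b else if n = 2 then c else ∅

/-- The class function `F` (restricted to the class `X`) is definable in `V`
with parameters in `V`. -/
def DefFunIn (V : ZFSet) (X : ZFSet → Prop) (F : ZFSet → ZFSet) : Prop :=
  ∃ φ : Fm, Fm.memOnly φ ∧ (∀ a ∈ Fm.paramSet φ, a ∈ V) ∧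
    ∀ x, x ∈ V → X x → ∀ y, y ∈ V → (SatV V φ (vtwo x y) ↔ y = F x)

/-- A local method definition over `V`: a nonempty class of TCIs in `V`,
definable in `V` with parameters in `V`. -/
def LocalMethodDef (V : ZFSet) (X : ZFSet → Prop) : Prop :=
  (∃ t, X t) ∧ (∀ t, X t → t ∈ V ∧ IsTCI t) ∧
  ∃ φ : Fm, Fm.memOnly φ ∧ (∀ a ∈ Fm.paramSet φ, a ∈ V) ∧
    ∀ t, t ∈ V → (X t ↔ SatV V φ (vone t))

/-- The reducibility relation `X ≤^M Y` between local method definitions: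
some `V`-definable `F : X → Y` satisfies
`∅ ≠ Eval^V(F(𝔗)) ⊆ Eval^V(𝔗)` for all consistent `𝔗 ∈ X`. -/
def LeqM (V : ZFSet) (X Y : ZFSet → Prop) : Prop :=
  ∃ F : ZFSet → ZFSet, DefFunIn V X F ∧
    (∀ x, x ∈ V → X x → F x ∈ V ∧ Y (F x)) ∧
    ∀ x, x ∈ V → X x → ConsistentTCI V x →
      (EvalT V (F x)).Nonempty ∧ EvalT V (F x) ⊆ EvalT V x

/-- `X ≡^M Y`. -/
def EquivM (V : ZFSet) (X Y : ZFSet → Prop) : Prop := LeqM V X Y ∧ LeqM V Y X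

/-- The local method definition `Π^M_n` of all `Π_n` TCIs. -/
def PiM (n : ℕ) : ZFSet → Prop := IsPiTCI n

/-- The local method definition `Σ^M_n` of all `Σ_n` TCIs. -/
def SigmaM (n : ℕ) : ZFSet → Prop := IsSigmaTCI n

/-- The local method definition `Fg = {𝔗(ℙ) : ℙ` a forcing notion in `V}`. -/
def FgClass (V : ZFSet) : ZFSet → Prop :=
  fun t => ∃ P, P ∈ V ∧ IsForcing P ∧ t = TofP P

/-! ### H(κ), collapse forcing, and structure-genericity -/

/-- `H` is (the code of) `H(|trcl(t)|⁺)` as computed inside `V`: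
the set of all `y ∈ V` whose transitive closure admits, in `V`,
an injection into the transitive closure of `t`. -/
def IsHIn (V t H : ZFSet) : Prop :=
  H ∈ V ∧ ∀ y, (y ∈ H ↔ (y ∈ V ∧
    ∀ ty tt, IsTrclOf {y} ty → IsTrclOf t tt → ∃ j ∈ V, ZInjFun j ty tt))

/-- The conditions of the collapse `Col(ω, λ)`: finite partial functions
from `ω` to `λ`. -/
def ColSet (lam : ZFSet) : ZFSet :=
  ZFSet.sep
    (fun f => (∀ q ∈ f, ∃ a b, q = opair a b) ∧
      (∀ a b b' : ZFSet, opair a b ∈ f → opair a b' ∈ f → b = b') ∧ f.toSet.Finite)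
    (ZFSet.powerset (ZFSet.prod ZFSet.omega lam))

/-- The collapse forcing `Col(ω, λ)`, ordered by reverse inclusion. -/
def ColForcing (lam : ZFSet) : ZFSet := opair (ColSet lam) (supsetOrder (ColSet lam))

/-- `g` is a `P`-generic filter over the ∈-structure with domain `H`:
a filter on `P` meeting every dense subset of `P` definable over `(H; ∈)`
with parameters in `H`. -/
def GenericOverStruct (H P g : ZFSet) : Prop :=
  IsFilterOn P g ∧
  ∀ φ : Fm, Fm.memOnly φ → (∀ a ∈ Fm.paramSet φ, a ∈ H) →
    ((∀ p ∈ zfst P, ∃ q ∈ zfst P, SatV H φ (vone q) ∧ ple P q p) →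
      ∃ q ∈ g, SatV H φ (vone q))

/-- The `Π₀` TCI `𝔗_s` whose models in any outer model are the subsets of `s`. -/
def Tsub (s : ZFSet) : ZFSet :=
  opair ∅ (opair ∅ (opair udSym ({opair udSym (opair s (natZ 0))} : ZFSet)))

end SmallExt

namespace SmallExt

/-- `g_p` for a `⊇`-ordered set of conditions `P`:
the conditions compatible with `p`. -/
def gpSup (P p : ZFSet) : ZFSet :=
  ZFSet.sep (fun q => ∃ r ∈ P, q ⊆ r ∧ p ⊆ r) P

/-- Outer models among arbitrary (not necessarily countable) transitive
models of ZFC. -/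
def OuterModelT (U W : ZFSet) : Prop :=
  IsTransModel U ∧ IsTransModel W ∧ U ⊆ W ∧ ∀ y ∈ W, IsOrd y → y ∈ U

/-- Consistency of a TCI relative to a transitive model `U` of ZFC. -/
def ConsistentT (U x : ZFSet) : Prop :=
  ∃ W M, OuterModelT U W ∧ M ∈ W ∧ ModelsTCI M x

end SmallExt



/-!
The formula `φ(t, L)` says that `L` is the set `lang t` of all codes `⟨k, ⟨a, u⟩⟩` with a tag
`k < 3` and entries `a`, `u` reachable from `t` in at most thirteen membership steps. The formula
`ψ(t, M, s)` says that `M = ⟨U, I⟩` with `I` the graph of a function, that `s` consists of the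
codes `⟨0, ⟨a, a⟩⟩` for `a ∈ U` and `⟨2, ⟨a, a⟩⟩`, `⟨1, ⟨a, u⟩⟩` for `⟨a, b⟩ ∈ I` and `u ∈ b`, and
that `s ⊆ lang t`. The tags make `M` recoverable from `s`, so `ψ` is one-one; the constraints of a
TCI bound the universe and the interpretations of its models, so the codes of a model do lie in
`lang t`. Both formulas are Δ₀: every quantifier ranges over the elements of a variable, or over
the components of a pair, which lie two membership steps below it. Hence both are absolute for
transitive sets, in particular for transitive models of ZFC.
-/

namespace SmallExt

/-! ### Renaming and satisfaction -/

def Tm.rename (ρ : ℕ → ℕ) : Tm → Tm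
  | .var n => .var (ρ n)
  | .param a => .param a
  | .func s n a => .func s n fun i => (a i).rename ρ

def liftRen (ρ : ℕ → ℕ) : ℕ → ℕ
  | 0 => 0
  | n + 1 => ρ n + 1

def Fm.rename : (ℕ → ℕ) → Fm → Fm
  | ρ, .rel s n a => .rel s n fun i => (a i).rename ρ
  | ρ, .eq t u => .eq (t.rename ρ) (u.rename ρ)
  | ρ, .not f => .not (f.rename ρ)
  | ρ, .imp f g => .imp (f.rename ρ) (g.rename ρ)
  | ρ, .all f => .all (f.rename (liftRen ρ))
  | ρ, .ex f => .ex (f.rename (liftRen ρ))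

def bexF (j : ℕ) (f : Fm) : Fm := .ex ((mem2 0 (j + 1)).and f)

def ballF (j : ℕ) (f : Fm) : Fm := .all ((mem2 0 (j + 1)).imp f)

@[simp] lemma mem2_rename (ρ : ℕ → ℕ) (i j : ℕ) : (mem2 i j).rename ρ = mem2 (ρ i) (ρ j) := by
  simp only [mem2, Fm.rename, Fm.rel.injEq, heq_eq_eq, true_and]
  funext k
  fin_cases k <;> rfl

@[simp] lemma and_rename (ρ : ℕ → ℕ) (f g : Fm) :
    (f.and g).rename ρ = (f.rename ρ).and (g.rename ρ) := rfl

@[simp] lemma bexF_rename (ρ : ℕ → ℕ) (j : ℕ) (f : Fm) :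
    (bexF j f).rename ρ = bexF (ρ j) (f.rename (liftRen ρ)) := by
  simp [bexF, Fm.rename, liftRen]

@[simp] lemma ballF_rename (ρ : ℕ → ℕ) (j : ℕ) (f : Fm) :
    (ballF j f).rename ρ = ballF (ρ j) (f.rename (liftRen ρ)) := by
  simp [ballF, Fm.rename, liftRen]

section Sat

variable {D : ZFSet → Prop} {rI : ZFSet → List ZFSet → Prop} {fI : ZFSet → List ZFSet → ZFSet}
  {v : ℕ → ZFSet}

@[simp] lemma vcons_zero (z : ZFSet) (v : ℕ → ZFSet) : vcons z v 0 = z := rfl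

@[simp] lemma vcons_succ (z : ZFSet) (v : ℕ → ZFSet) (n : ℕ) : vcons z v (n + 1) = v n := rfl

lemma sat_mem2 {i j : ℕ} : Sat D memRel fI (mem2 i j) v ↔ v i ∈ v j := by
  simp [Sat, mem2, memRel, Tm.eval, List.ofFn_succ]

lemma sat_and {f g : Fm} : Sat D rI fI (f.and g) v ↔ Sat D rI fI f v ∧ Sat D rI fI g v := by
  simp [Fm.and, Sat]

lemma sat_bexF {j : ℕ} {f : Fm} :
    Sat D memRel fI (bexF j f) v ↔ ∃ z, D z ∧ z ∈ v j ∧ Sat D memRel fI f (vcons z v) := by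
  simp [bexF, Sat, sat_and, sat_mem2]

lemma sat_ballF {j : ℕ} {f : Fm} :
    Sat D memRel fI (ballF j f) v ↔ ∀ z, D z → z ∈ v j → Sat D memRel fI f (vcons z v) := by
  simp [ballF, Sat, sat_mem2]

end Sat

section SatU

variable {v : ℕ → ZFSet} {f g : Fm}

@[simp] lemma satU_mem2 {i j : ℕ} : SatU (mem2 i j) v ↔ v i ∈ v j := sat_mem2

@[simp] lemma satU_eq2 {i j : ℕ} : SatU (eq2 i j) v ↔ v i = v j := by
  simp [SatU, Sat, eq2, Tm.eval]

@[simp] lemma satU_not : SatU f.not v ↔ ¬ SatU f v := Iff.rfl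

@[simp] lemma satU_imp : SatU (f.imp g) v ↔ (SatU f v → SatU g v) := Iff.rfl

@[simp] lemma satU_and : SatU (f.and g) v ↔ SatU f v ∧ SatU g v := sat_and

@[simp] lemma satU_or : SatU (f.or g) v ↔ SatU f v ∨ SatU g v := by
  simp [SatU, Fm.or, Sat, or_iff_not_imp_left]

@[simp] lemma satU_bexF {j : ℕ} : SatU (bexF j f) v ↔ ∃ z ∈ v j, SatU f (vcons z v) := by
  simp [SatU, sat_bexF]

@[simp] lemma satU_ballF {j : ℕ} : SatU (ballF j f) v ↔ ∀ z ∈ v j, SatU f (vcons z v) := by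
  simp [SatU, sat_ballF]

lemma Tm.eval_rename (fI : ZFSet → List ZFSet → ZFSet) (ρ : ℕ → ℕ) (v : ℕ → ZFSet) (t : Tm) :
    (t.rename ρ).eval fI v = t.eval fI (v ∘ ρ) := by
  induction t with
  | var n => rfl
  | param a => rfl
  | func s n a ih => simp only [Tm.rename, Tm.eval, ih]

lemma vcons_comp_liftRen (z : ZFSet) (v : ℕ → ZFSet) (ρ : ℕ → ℕ) :
    vcons z v ∘ liftRen ρ = vcons z (v ∘ ρ) := by
  funext n
  cases n <;> rfl

lemma vcons_comp_succ (z : ZFSet) (v : ℕ → ZFSet) : vcons z v ∘ Nat.succ = v := rfl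

lemma satU_rename (ρ : ℕ → ℕ) (f : Fm) (v : ℕ → ZFSet) : SatU (f.rename ρ) v ↔ SatU f (v ∘ ρ) := by
  induction f generalizing ρ v with
  | rel s n a => simp [SatU, Sat, Fm.rename, Tm.eval_rename]
  | eq t u => simp [SatU, Sat, Fm.rename, Tm.eval_rename]
  | not f ih => exact not_congr (ih ρ v)
  | imp f g ihf ihg => exact imp_congr (ihf ρ v) (ihg ρ v)
  | all f ih =>
    exact forall_congr' fun z => imp_congr_right fun _ =>
      (ih _ _).trans (by rw [vcons_comp_liftRen]; rfl)
  | ex f ih =>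
    exact exists_congr fun z => and_congr_right fun _ =>
      (ih _ _).trans (by rw [vcons_comp_liftRen]; rfl)

end SatU

/-! ### Δ₀ formulas and absoluteness -/

inductive IsDelta0 : ℕ → Fm → Prop
  | mem {n i j : ℕ} : i < n → j < n → IsDelta0 n (mem2 i j)
  | eq {n i j : ℕ} : i < n → j < n → IsDelta0 n (eq2 i j)
  | not {n : ℕ} {f : Fm} : IsDelta0 n f → IsDelta0 n f.not
  | imp {n : ℕ} {f g : Fm} : IsDelta0 n f → IsDelta0 n g → IsDelta0 n (f.imp g)
  | bex {n j : ℕ} {f : Fm} : j < n → IsDelta0 (n + 1) f → IsDelta0 n (bexF j f)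
  | ball {n j : ℕ} {f : Fm} : j < n → IsDelta0 (n + 1) f → IsDelta0 n (ballF j f)

lemma memOnly_mem2 (i j : ℕ) : Fm.memOnly (mem2 i j) :=
  ⟨rfl, rfl, fun k => by fin_cases k <;> trivial⟩

lemma paramSet_mem2 (i j : ℕ) : Fm.paramSet (mem2 i j) = ∅ := by
  ext
  simp [mem2, Fm.paramSet, Tm.paramSet, Fin.exists_fin_two]

lemma free_mem2 (i j : ℕ) : Fm.free (mem2 i j) = {i, j} := by
  ext
  simp [mem2, Fm.free, Tm.free, Fin.exists_fin_two, eq_comm]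

lemma liftRen_lt {n n' : ℕ} {ρ : ℕ → ℕ} (hρ : ∀ m < n, ρ m < n') :
    ∀ m < n + 1, liftRen ρ m < n' + 1
  | 0, _ => Nat.succ_pos _
  | m + 1, hm => Nat.succ_lt_succ (hρ m (Nat.lt_of_succ_lt_succ hm))

lemma vcons_mem {W : ZFSet} (hW : W.IsTransitive) {n j : ℕ} {v : ℕ → ZFSet}
    (hv : ∀ m < n, v m ∈ W) (hj : j < n) {z : ZFSet} (hz : z ∈ v j) :
    ∀ m < n + 1, vcons z v m ∈ W
  | 0, _ => hW _ (hv j hj) hz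
  | m + 1, hm => hv m (Nat.lt_of_succ_lt_succ hm)

namespace IsDelta0

variable {n : ℕ} {f g : Fm}

lemma and (hf : IsDelta0 n f) (hg : IsDelta0 n g) : IsDelta0 n (f.and g) :=
  .not (.imp hf (.not hg))

lemma or (hf : IsDelta0 n f) (hg : IsDelta0 n g) : IsDelta0 n (f.or g) :=
  .imp (.not hf) hg

lemma memOnly (h : IsDelta0 n f) : Fm.memOnly f := by
  induction h with
  | mem => exact memOnly_mem2 _ _
  | eq => exact ⟨trivial, trivial⟩
  | not _ ih => exact ih
  | imp _ _ ihf ihg => exact ⟨ihf, ihg⟩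
  | bex _ _ ih | ball _ _ ih => exact ⟨memOnly_mem2 _ _, ih⟩

lemma paramSet_eq_empty (h : IsDelta0 n f) : Fm.paramSet f = ∅ := by
  induction h with
  | mem => exact paramSet_mem2 _ _
  | eq => simp [eq2, Fm.paramSet, Tm.paramSet]
  | not _ ih => exact ih
  | imp _ _ ihf ihg => simp [Fm.paramSet, ihf, ihg]
  | bex _ _ ih | ball _ _ ih =>
    simp [bexF, ballF, Fm.and, Fm.paramSet, paramSet_mem2, ih]

lemma lt_of_mem_free (h : IsDelta0 n f) {m : ℕ} (hm : m ∈ Fm.free f) : m < n := by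
  induction h generalizing m with
  | mem hi hj => rcases (free_mem2 _ _ ▸ hm) with rfl | rfl <;> assumption
  | eq hi hj => rcases hm with rfl | rfl <;> assumption
  | not _ ih => exact ih hm
  | imp _ _ ihf ihg => exact hm.elim ihf ihg
  | bex hj _ ih | ball hj _ ih =>
    simp only [bexF, ballF, Fm.and, Fm.free, free_mem2] at hm
    rcases hm with (hm | hm) | hm
    · simp at hm
    · simp at hm; omega
    · exact Nat.lt_of_succ_lt_succ (ih hm)

lemma rename (h : IsDelta0 n f) {n' : ℕ} {ρ : ℕ → ℕ} (hρ : ∀ m < n, ρ m < n') :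
    IsDelta0 n' (f.rename ρ) := by
  induction h generalizing n' ρ with
  | mem hi hj => simpa using mem (hρ _ hi) (hρ _ hj)
  | eq hi hj => exact eq (hρ _ hi) (hρ _ hj)
  | not _ ih => exact .not (ih hρ)
  | imp _ _ ihf ihg => exact .imp (ihf hρ) (ihg hρ)
  | bex hj _ ih => rw [bexF_rename]; exact bex (hρ _ hj) (ih (liftRen_lt hρ))
  | ball hj _ ih => rw [ballF_rename]; exact ball (hρ _ hj) (ih (liftRen_lt hρ))

theorem satV_iff_satU {W : ZFSet} (hW : W.IsTransitive) (h : IsDelta0 n f) {v : ℕ → ZFSet}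
    (hv : ∀ m < n, v m ∈ W) : SatV W f v ↔ SatU f v := by
  induction h generalizing v with
  | mem | eq => exact Iff.rfl
  | not _ ih => exact not_congr (ih hv)
  | imp _ _ ihf ihg => exact imp_congr (ihf hv) (ihg hv)
  | bex hj _ ih =>
    simp only [SatV, sat_bexF, satU_bexF]
    exact ⟨fun ⟨z, _, hz, h⟩ => ⟨z, hz, (ih (vcons_mem hW hv hj hz)).1 h⟩,
      fun ⟨z, hz, h⟩ => ⟨z, hW _ (hv _ hj) hz, hz, (ih (vcons_mem hW hv hj hz)).2 h⟩⟩
  | ball hj _ ih =>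
    simp only [SatV, sat_ballF, satU_ballF]
    exact ⟨fun h z hz => (ih (vcons_mem hW hv hj hz)).1 (h z (hW _ (hv _ hj) hz) hz),
      fun h z _ hz => (ih (vcons_mem hW hv hj hz)).2 (h z hz)⟩

end IsDelta0

/-! ### A library of Δ₀ formulas -/

section Formulas

variable {v : ℕ → ZFSet} {n : ℕ}

def emptyF (e : ℕ) : Fm := ballF e (eq2 0 0).not

@[simp] lemma satU_emptyF {e : ℕ} : SatU (emptyF e) v ↔ v e = ∅ := by
  simp [emptyF, ZFSet.eq_empty]

lemma isDelta0_emptyF {e : ℕ} (he : e < n) : IsDelta0 n (emptyF e) :=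
  .ball he (.not (.eq (by omega) (by omega)))

def succF (w m : ℕ) : Fm :=
  (mem2 m w).and ((ballF m (mem2 0 (w + 1))).and (ballF w ((mem2 0 (m + 1)).or (eq2 0 (m + 1)))))

@[simp] lemma satU_succF {w m : ℕ} : SatU (succF w m) v ↔ v w = insert (v m) (v m) := by
  simp only [succF, satU_and, satU_mem2, satU_ballF, satU_or, satU_eq2, vcons_zero, vcons_succ]
  rw [ZFSet.ext_iff (x := v w)]
  simp only [ZFSet.mem_insert_iff]
  grind

lemma isDelta0_succF {w m : ℕ} (hw : w < n) (hm : m < n) : IsDelta0 n (succF w m) :=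
  (IsDelta0.mem hm hw).and ((IsDelta0.ball hm (.mem (by omega) (by omega))).and
    (.ball hw ((IsDelta0.mem (by omega) (by omega)).or (.eq (by omega) (by omega)))))

def natF : ℕ → ℕ → Fm
  | 0, c => emptyF c
  | k + 1, c => bexF c ((natF k 0).and (succF (c + 1) 0))

@[simp] lemma satU_natF {k c : ℕ} : SatU (natF k c) v ↔ v c = natZ k := by
  induction k generalizing c v with
  | zero => simp [natF, natZ]
  | succ k ih =>
    simp only [natF, satU_bexF, satU_and, ih, satU_succF, vcons_zero, vcons_succ, natZ]
    constructor
    · rintro ⟨z, -, rfl, h⟩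
      exact h
    · intro h
      exact ⟨natZ k, by simp [h], rfl, h⟩

lemma isDelta0_natF {k c : ℕ} (hc : c < n) : IsDelta0 n (natF k c) := by
  induction k generalizing c n with
  | zero => exact isDelta0_emptyF hc
  | succ k ih => exact .bex hc ((ih (by omega)).and (isDelta0_succF (by omega) (by omega)))

def memNatF : ℕ → ℕ → Fm
  | 0, c => (eq2 c c).not
  | k + 1, c => (natF k c).or (memNatF k c)

@[simp] lemma satU_memNatF {k c : ℕ} : SatU (memNatF k c) v ↔ v c ∈ natZ k := by
  induction k with
  | zero => simp [memNatF, natZ]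
  | succ k ih => simp [memNatF, natZ, ih]

lemma isDelta0_memNatF {k c : ℕ} (hc : c < n) : IsDelta0 n (memNatF k c) := by
  induction k with
  | zero => exact .not (.eq hc hc)
  | succ k ih => exact (isDelta0_natF hc).or ih

def sglF (w a : ℕ) : Fm := (mem2 a w).and (ballF w (eq2 0 (a + 1)))

@[simp] lemma satU_sglF {w a : ℕ} : SatU (sglF w a) v ↔ v w = {v a} := by
  simp only [sglF, satU_and, satU_mem2, satU_ballF, satU_eq2, vcons_zero, vcons_succ]
  rw [ZFSet.ext_iff (x := v w)]
  simp only [ZFSet.mem_singleton]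
  grind

lemma isDelta0_sglF {w a : ℕ} (hw : w < n) (ha : a < n) : IsDelta0 n (sglF w a) :=
  (IsDelta0.mem ha hw).and (.ball hw (.eq (by omega) (by omega)))

def uprF (w a b : ℕ) : Fm :=
  (mem2 a w).and ((mem2 b w).and (ballF w ((eq2 0 (a + 1)).or (eq2 0 (b + 1)))))

@[simp] lemma satU_uprF {w a b : ℕ} : SatU (uprF w a b) v ↔ v w = {v a, v b} := by
  simp only [uprF, satU_and, satU_mem2, satU_ballF, satU_or, satU_eq2, vcons_zero, vcons_succ]
  rw [ZFSet.ext_iff (x := v w)]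
  simp only [ZFSet.mem_insert_iff, ZFSet.mem_singleton]
  grind

lemma isDelta0_uprF {w a b : ℕ} (hw : w < n) (ha : a < n) (hb : b < n) :
    IsDelta0 n (uprF w a b) :=
  (IsDelta0.mem ha hw).and ((IsDelta0.mem hb hw).and
    (.ball hw ((IsDelta0.eq (by omega) (by omega)).or (.eq (by omega) (by omega)))))

def pairF (p a b : ℕ) : Fm :=
  (bexF p (sglF 0 (a + 1))).and ((bexF p (uprF 0 (a + 1) (b + 1))).and
    (ballF p ((sglF 0 (a + 1)).or (uprF 0 (a + 1) (b + 1)))))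

@[simp] lemma satU_pairF {p a b : ℕ} : SatU (pairF p a b) v ↔ v p = opair (v a) (v b) := by
  simp only [pairF, satU_and, satU_bexF, satU_ballF, satU_or, satU_sglF, satU_uprF, vcons_zero,
    vcons_succ, exists_eq_right]
  rw [ZFSet.ext_iff (x := v p)]
  simp only [opair, ZFSet.pair, ZFSet.mem_insert_iff, ZFSet.mem_singleton]
  grind

lemma isDelta0_pairF {p a b : ℕ} (hp : p < n) (ha : a < n) (hb : b < n) :
    IsDelta0 n (pairF p a b) :=
  (IsDelta0.bex hp (isDelta0_sglF (by omega) (by omega))).and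
    ((IsDelta0.bex hp (isDelta0_uprF (by omega) (by omega) (by omega))).and
      (.ball hp ((isDelta0_sglF (by omega) (by omega)).or
        (isDelta0_uprF (by omega) (by omega) (by omega)))))

end Formulas

section PairQuantifiers

variable {v : ℕ → ZFSet} {n : ℕ} {f : Fm}

lemma singleton_mem_opair {c w : ZFSet} : ({c} : ZFSet) ∈ opair c w := by
  simp [opair, ZFSet.pair]

lemma pair_mem_opair {c w : ZFSet} : ({c, w} : ZFSet) ∈ opair c w := by
  simp [opair, ZFSet.pair]

lemma exists_mem_mem_opair {p : ZFSet} {P : ZFSet → ZFSet → Prop} :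
    (∃ x ∈ p, ∃ c ∈ x, ∃ y ∈ p, ∃ w ∈ y, p = opair c w ∧ P c w) ↔
      ∃ c w, p = opair c w ∧ P c w := by
  constructor
  · rintro ⟨-, -, c, -, -, -, w, -, h⟩
    exact ⟨c, w, h⟩
  · rintro ⟨c, w, rfl, h⟩
    exact ⟨{c}, singleton_mem_opair, c, by simp, {c, w}, pair_mem_opair, w, by simp, rfl, h⟩

lemma forall_mem_mem_opair {p : ZFSet} {P : ZFSet → ZFSet → Prop} :
    (∀ x ∈ p, ∀ c ∈ x, ∀ y ∈ p, ∀ w ∈ y, p = opair c w → P c w) ↔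
      ∀ c w, p = opair c w → P c w := by
  simpa using (exists_mem_mem_opair (p := p) (P := fun c w => ¬ P c w)).not

def exPairRen : ℕ → ℕ
  | 0 => 0
  | 1 => 2
  | m + 2 => m + 4

lemma vcons_comp_exPairRen (w y c x : ZFSet) (v : ℕ → ZFSet) :
    vcons w (vcons y (vcons c (vcons x v))) ∘ exPairRen = vcons w (vcons c v) := by
  funext m
  rcases m with _ | _ | m <;> rfl

lemma exPairRen_lt : ∀ m < n + 2, exPairRen m < n + 4
  | 0, _ => by simp [exPairRen]
  | 1, _ => by simp [exPairRen]
  | m + 2, hm => by simp only [exPairRen]; omega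

/-- The quantifiers over the components `c ∈ x ∈ var p` and `w ∈ y ∈ var p` of a pair are
bounded, through two auxiliary variables `x` and `y` that `exPairRen` makes `f` skip. -/
def exPairF (p : ℕ) (f : Fm) : Fm :=
  bexF p (bexF 0 (bexF (p + 2) (bexF 0 ((pairF (p + 4) 2 0).and (f.rename exPairRen)))))

def allPairF (p : ℕ) (f : Fm) : Fm :=
  ballF p (ballF 0 (ballF (p + 2) (ballF 0 ((pairF (p + 4) 2 0).imp (f.rename exPairRen)))))

@[simp] lemma satU_exPairF {p : ℕ} :
    SatU (exPairF p f) v ↔ ∃ c w, v p = opair c w ∧ SatU f (vcons w (vcons c v)) := by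
  simp only [exPairF, satU_bexF, satU_and, satU_pairF, satU_rename, vcons_comp_exPairRen,
    vcons_zero, vcons_succ]
  exact exists_mem_mem_opair

@[simp] lemma satU_allPairF {p : ℕ} :
    SatU (allPairF p f) v ↔ ∀ c w, v p = opair c w → SatU f (vcons w (vcons c v)) := by
  simp only [allPairF, satU_ballF, satU_imp, satU_pairF, satU_rename, vcons_comp_exPairRen,
    vcons_zero, vcons_succ]
  exact forall_mem_mem_opair

lemma isDelta0_exPairF {p : ℕ} (hp : p < n) (hf : IsDelta0 (n + 2) f) :
    IsDelta0 n (exPairF p f) :=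
  .bex hp (.bex (by omega) (.bex (by omega) (.bex (by omega)
    ((isDelta0_pairF (by omega) (by omega) (by omega)).and (hf.rename exPairRen_lt)))))

lemma isDelta0_allPairF {p : ℕ} (hp : p < n) (hf : IsDelta0 (n + 2) f) :
    IsDelta0 n (allPairF p f) :=
  .ball hp (.ball (by omega) (.ball (by omega) (.ball (by omega)
    ((isDelta0_pairF (by omega) (by omega) (by omega)).imp (hf.rename exPairRen_lt)))))

def entryRen : ℕ → ℕ := liftRen (liftRen Nat.succ)

lemma vcons_comp_entryRen (w c p : ZFSet) (v : ℕ → ZFSet) :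
    vcons w (vcons c (vcons p v)) ∘ entryRen = vcons w (vcons c v) := by
  funext m
  rcases m with _ | _ | m <;> rfl

lemma entryRen_lt : ∀ m < n + 2, entryRen m < n + 3 :=
  liftRen_lt (liftRen_lt fun _ h => Nat.succ_lt_succ h)

def exEntryF (i : ℕ) (f : Fm) : Fm := bexF i (exPairF 0 (f.rename entryRen))

def allEntryF (i : ℕ) (f : Fm) : Fm := ballF i (allPairF 0 (f.rename entryRen))

@[simp] lemma satU_exEntryF {i : ℕ} :
    SatU (exEntryF i f) v ↔ ∃ a b, opair a b ∈ v i ∧ SatU f (vcons b (vcons a v)) := by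
  simp only [exEntryF, satU_bexF, satU_exPairF, satU_rename, vcons_comp_entryRen, vcons_zero]
  constructor
  · rintro ⟨_, hp, a, b, rfl, h⟩
    exact ⟨a, b, hp, h⟩
  · rintro ⟨a, b, hp, h⟩
    exact ⟨_, hp, a, b, rfl, h⟩

@[simp] lemma satU_allEntryF {i : ℕ} :
    SatU (allEntryF i f) v ↔ ∀ a b, opair a b ∈ v i → SatU f (vcons b (vcons a v)) := by
  simp only [allEntryF, satU_ballF, satU_allPairF, satU_rename, vcons_comp_entryRen, vcons_zero]
  exact ⟨fun h a b hp => h _ hp a b rfl, fun h _ hp a b e => h a b (e ▸ hp)⟩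

lemma isDelta0_exEntryF {i : ℕ} (hi : i < n) (hf : IsDelta0 (n + 2) f) :
    IsDelta0 n (exEntryF i f) :=
  .bex hi (isDelta0_exPairF (by omega) (hf.rename entryRen_lt))

lemma isDelta0_allEntryF {i : ℕ} (hi : i < n) (hf : IsDelta0 (n + 2) f) :
    IsDelta0 n (allEntryF i f) :=
  .ball hi (isDelta0_allPairF (by omega) (hf.rename entryRen_lt))

end PairQuantifiers

lemma mem_natZ {a : ZFSet} {m : ℕ} : a ∈ natZ m ↔ ∃ k < m, a = natZ k := by
  induction m with
  | zero => simp [natZ]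
  | succ m ih =>
    simp only [natZ, ZFSet.mem_insert_iff, ih]
    constructor
    · rintro (rfl | ⟨k, hk, rfl⟩)
      exacts [⟨m, by omega, rfl⟩, ⟨k, by omega, rfl⟩]
    · rintro ⟨k, hk, rfl⟩
      rcases Nat.lt_succ_iff_lt_or_eq.1 hk with hk | rfl
      exacts [Or.inr ⟨k, hk, rfl⟩, Or.inl rfl]

lemma natZ_injective : Function.Injective natZ := by
  intro j k h
  by_contra hjk
  rcases Nat.lt_or_gt_of_ne hjk with hjk | hjk
  · have h' : natZ j ∈ natZ k := mem_natZ.2 ⟨j, hjk, rfl⟩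
    exact ZFSet.mem_irrefl _ (h ▸ h')
  · have h' : natZ k ∈ natZ j := mem_natZ.2 ⟨k, hjk, rfl⟩
    exact ZFSet.mem_irrefl _ (h ▸ h')

section Tagged

variable {v : ℕ → ZFSet} {n : ℕ}

def tagged (k : ℕ) (a u : ZFSet) : ZFSet := opair (natZ k) (opair a u)

lemma tagged_inj {k k' : ℕ} {a u a' u' : ZFSet} :
    tagged k a u = tagged k' a' u' ↔ k = k' ∧ a = a' ∧ u = u' := by
  simp [tagged, opair, ZFSet.pair_inj, natZ_injective.eq_iff]

def tripleF (k z a u : ℕ) : Fm := exPairF z ((natF k 1).and (pairF 0 (a + 2) (u + 2)))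

@[simp] lemma satU_tripleF {k z a u : ℕ} :
    SatU (tripleF k z a u) v ↔ v z = tagged k (v a) (v u) := by
  simp [tripleF, tagged]

lemma isDelta0_tripleF {k z a u : ℕ} (hz : z < n) (ha : a < n) (hu : u < n) :
    IsDelta0 n (tripleF k z a u) :=
  isDelta0_exPairF hz
    ((isDelta0_natF (by omega)).and (isDelta0_pairF (by omega) (by omega) (by omega)))

def memTripleF (k s a u : ℕ) : Fm := bexF s (tripleF k 0 (a + 1) (u + 1))

@[simp] lemma satU_memTripleF {k s a u : ℕ} :
    SatU (memTripleF k s a u) v ↔ tagged k (v a) (v u) ∈ v s := by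
  simp [memTripleF]

lemma isDelta0_memTripleF {k s a u : ℕ} (hs : s < n) (ha : a < n) (hu : u < n) :
    IsDelta0 n (memTripleF k s a u) :=
  .bex hs (isDelta0_tripleF (by omega) (by omega) (by omega))

end Tagged

/-- The sets reached from `t` by at most `k + 1` membership steps. -/
def reachSet : ℕ → ZFSet → ZFSet
  | 0, t => t
  | k + 1, t => t ∪ ZFSet.sUnion (zimage (reachSet k) t)

section Reach

variable {a t : ZFSet} {k : ℕ}

lemma mem_reachSet_succ : a ∈ reachSet (k + 1) t ↔ a ∈ t ∨ ∃ z ∈ t, a ∈ reachSet k z := by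
  simp [reachSet, zimage]

lemma mem_reachSet_of_mem (h : a ∈ t) : a ∈ reachSet k t := by
  cases k with
  | zero => exact h
  | succ k => exact mem_reachSet_succ.2 (Or.inl h)

lemma reachSet_subset_succ : reachSet k t ⊆ reachSet (k + 1) t := by
  induction k generalizing t with
  | zero => exact fun _ => mem_reachSet_of_mem
  | succ k ih =>
    intro a ha
    rcases mem_reachSet_succ.1 ha with ha | ⟨z, hz, ha⟩
    · exact mem_reachSet_of_mem ha
    · exact mem_reachSet_succ.2 (Or.inr ⟨z, hz, ih ha⟩)

lemma reachSet_mono {k k' : ℕ} (h : k ≤ k') : reachSet k t ⊆ reachSet k' t := by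
  induction h with
  | refl => exact fun _ => id
  | step _ ih => exact fun _ ha => reachSet_subset_succ (ih ha)

lemma mem_reachSet_of_mem_of_mem {z : ZFSet} (hz : z ∈ reachSet k t) (ha : a ∈ z) :
    a ∈ reachSet (k + 1) t := by
  induction k generalizing t with
  | zero => exact mem_reachSet_succ.2 (Or.inr ⟨z, hz, ha⟩)
  | succ k ih =>
    rcases mem_reachSet_succ.1 hz with hz | ⟨z', hz', hz⟩
    · exact mem_reachSet_succ.2 (Or.inr ⟨z, hz, mem_reachSet_of_mem ha⟩)
    · exact mem_reachSet_succ.2 (Or.inr ⟨z', hz', ih hz⟩)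

end Reach

section ReachFormulas

variable {v : ℕ → ZFSet} {n : ℕ}

def reachF : ℕ → ℕ → ℕ → Fm
  | 0, i, j => mem2 i j
  | k + 1, i, j => (mem2 i j).or (bexF j (reachF k (i + 1) 0))

@[simp] lemma satU_reachF {k i j : ℕ} : SatU (reachF k i j) v ↔ v i ∈ reachSet k (v j) := by
  induction k generalizing i j v with
  | zero => simp [reachF, reachSet]
  | succ k ih => simp [reachF, ih, mem_reachSet_succ]

lemma isDelta0_reachF {k i j : ℕ} (hi : i < n) (hj : j < n) : IsDelta0 n (reachF k i j) := by
  induction k generalizing i j n with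
  | zero => exact .mem hi hj
  | succ k ih => exact (IsDelta0.mem hi hj).or (.bex hj (ih (by omega) (by omega)))

def ballReachF : ℕ → ℕ → Fm → Fm
  | 0, j, f => ballF j f
  | k + 1, j, f => (ballF j f).and (ballF j (ballReachF k 0 (f.rename (liftRen Nat.succ))))

@[simp] lemma satU_ballReachF {k j : ℕ} {f : Fm} :
    SatU (ballReachF k j f) v ↔ ∀ a ∈ reachSet k (v j), SatU f (vcons a v) := by
  induction k generalizing j v f with
  | zero => simp [ballReachF, reachSet]
  | succ k ih =>
    simp only [ballReachF, satU_and, satU_ballF, ih, satU_rename, vcons_comp_liftRen,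
      vcons_comp_succ, vcons_zero, mem_reachSet_succ]
    exact ⟨fun ⟨h, h'⟩ a ha => ha.elim (h a) fun ⟨z, hz, ha⟩ => h' z hz a ha,
      fun h => ⟨fun a ha => h a (.inl ha), fun z hz a ha => h a (.inr ⟨z, hz, ha⟩)⟩⟩

lemma isDelta0_ballReachF {k j : ℕ} {f : Fm} (hj : j < n) (hf : IsDelta0 (n + 1) f) :
    IsDelta0 n (ballReachF k j f) := by
  induction k generalizing j n f with
  | zero => exact .ball hj hf
  | succ k ih =>
    exact (IsDelta0.ball hj hf).and (.ball hj (ih (by omega)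
      (hf.rename (liftRen_lt fun _ h => Nat.succ_lt_succ h))))

end ReachFormulas

/-! ### The language and the diagrams -/

/-- The paper's `𝓛_𝔗`, as codes `⟨k, ⟨a, u⟩⟩` with `k < 3`. The depth `12` is what a TCI
`⟨T, ⟨σ, ⟨U̇, ϑ⟩⟩⟩` needs: the elements of its constraint sets `y`, and of their elements, lie at
most `13` membership steps below it. -/
def lang (t : ZFSet) : ZFSet := ZFSet.prod (natZ 3) (ZFSet.prod (reachSet 12 t) (reachSet 12 t))

lemma mem_lang {t z : ZFSet} :
    z ∈ lang t ↔ ∃ k < 3, ∃ a ∈ reachSet 12 t, ∃ u ∈ reachSet 12 t, z = tagged k a u := by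
  simp only [lang, ZFSet.mem_prod, mem_natZ, tagged, opair]
  grind

section Language

variable {v : ℕ → ZFSet} {n : ℕ}

def langF (z t : ℕ) : Fm :=
  exPairF z ((memNatF 3 1).and (exPairF 0 ((reachF 12 1 (t + 4)).and (reachF 12 0 (t + 4)))))

@[simp] lemma satU_langF {z t : ℕ} : SatU (langF z t) v ↔ v z ∈ lang (v t) := by
  simp only [langF, satU_exPairF, satU_and, satU_memNatF, satU_reachF, vcons_zero, vcons_succ,
    lang, ZFSet.mem_prod, opair]
  grind

lemma isDelta0_langF {z t : ℕ} (hz : z < n) (ht : t < n) : IsDelta0 n (langF z t) :=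
  isDelta0_exPairF hz ((isDelta0_memNatF (by omega)).and (isDelta0_exPairF (by omega)
    ((isDelta0_reachF (by omega) (by omega)).and (isDelta0_reachF (by omega) (by omega)))))

def langSubsetF (t L : ℕ) : Fm :=
  ballReachF 12 t (ballReachF 12 (t + 1) ((memTripleF 0 (L + 2) 1 0).and
    ((memTripleF 1 (L + 2) 1 0).and (memTripleF 2 (L + 2) 1 0))))

@[simp] lemma satU_langSubsetF {t L : ℕ} : SatU (langSubsetF t L) v ↔ lang (v t) ⊆ v L := by
  simp only [langSubsetF, satU_ballReachF, satU_and, satU_memTripleF, vcons_zero, vcons_succ]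
  constructor
  · intro h z hz
    obtain ⟨k, hk, a, ha, u, hu, rfl⟩ := mem_lang.1 hz
    interval_cases k
    exacts [(h a ha u hu).1, (h a ha u hu).2.1, (h a ha u hu).2.2]
  · intro h a ha u hu
    exact ⟨h (mem_lang.2 ⟨0, by omega, a, ha, u, hu, rfl⟩),
      h (mem_lang.2 ⟨1, by omega, a, ha, u, hu, rfl⟩),
      h (mem_lang.2 ⟨2, by omega, a, ha, u, hu, rfl⟩)⟩

lemma isDelta0_langSubsetF {t L : ℕ} (ht : t < n) (hL : L < n) : IsDelta0 n (langSubsetF t L) :=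
  isDelta0_ballReachF ht (isDelta0_ballReachF (by omega)
    ((isDelta0_memTripleF (by omega) (by omega) (by omega)).and
      ((isDelta0_memTripleF (by omega) (by omega) (by omega)).and
        (isDelta0_memTripleF (by omega) (by omega) (by omega)))))

def φF : Fm := (ballF 1 (langF 0 1)).and (langSubsetF 0 1)

lemma satU_φF : SatU φF v ↔ v 1 = lang (v 0) := by
  simp only [φF, satU_and, satU_ballF, satU_langF, satU_langSubsetF, vcons_zero, vcons_succ]
  exact ⟨fun ⟨h, h'⟩ => subset_antisymm h h', fun h => ⟨h.subset, h.superset⟩⟩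

lemma isDelta0_φF : IsDelta0 2 φF :=
  (IsDelta0.ball (by omega) (isDelta0_langF (by omega) (by omega))).and
    (isDelta0_langSubsetF (by omega) (by omega))

end Language

def IsGraph (I : ZFSet) : Prop :=
  ∀ p ∈ I, ∃ a b, p = opair a b ∧ ∀ a' b', opair a' b' ∈ I → a' = a → b' = b

def IsCode (U I z : ZFSet) : Prop :=
  (∃ a ∈ U, z = tagged 0 a a) ∨
    ∃ a b, opair a b ∈ I ∧ (z = tagged 2 a a ∨ ∃ u ∈ b, z = tagged 1 a u)

def IsDiagram (t M s : ZFSet) : Prop :=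
  ∃ U I, M = opair U I ∧ IsGraph I ∧ (∀ z, z ∈ s ↔ IsCode U I z) ∧ s ⊆ lang t

section DiagramFormulas

variable {v : ℕ → ZFSet} {n : ℕ}

def graphF (i : ℕ) : Fm := ballF i (exPairF 0 (allEntryF (i + 3) ((eq2 1 3).imp (eq2 0 2))))

@[simp] lemma satU_graphF {i : ℕ} : SatU (graphF i) v ↔ IsGraph (v i) := by
  simp [graphF, IsGraph]

lemma isDelta0_graphF {i : ℕ} (hi : i < n) : IsDelta0 n (graphF i) :=
  .ball hi (isDelta0_exPairF (by omega) (isDelta0_allEntryF (by omega)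
    (.imp (.eq (by omega) (by omega)) (.eq (by omega) (by omega)))))

def codeF (z U I : ℕ) : Fm :=
  (bexF U (tripleF 0 (z + 1) 0 0)).or
    (exEntryF I ((tripleF 2 (z + 2) 1 1).or (bexF 0 (tripleF 1 (z + 3) 2 0))))

@[simp] lemma satU_codeF {z U I : ℕ} : SatU (codeF z U I) v ↔ IsCode (v U) (v I) (v z) := by
  simp [codeF, IsCode]

lemma isDelta0_codeF {z U I : ℕ} (hz : z < n) (hU : U < n) (hI : I < n) :
    IsDelta0 n (codeF z U I) :=
  (IsDelta0.bex hU (isDelta0_tripleF (by omega) (by omega) (by omega))).or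
    (isDelta0_exEntryF hI ((isDelta0_tripleF (by omega) (by omega) (by omega)).or
      (.bex (by omega) (isDelta0_tripleF (by omega) (by omega) (by omega)))))

def codesInF (s U I : ℕ) : Fm :=
  (ballF U (memTripleF 0 (s + 1) 0 0)).and
    (allEntryF I ((memTripleF 2 (s + 2) 1 1).and (ballF 0 (memTripleF 1 (s + 3) 2 0))))

@[simp] lemma satU_codesInF {s U I : ℕ} :
    SatU (codesInF s U I) v ↔ ∀ z, IsCode (v U) (v I) z → z ∈ v s := by
  simp only [codesInF, satU_and, satU_ballF, satU_allEntryF, satU_memTripleF, vcons_zero,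
    vcons_succ, IsCode]
  grind

lemma isDelta0_codesInF {s U I : ℕ} (hs : s < n) (hU : U < n) (hI : I < n) :
    IsDelta0 n (codesInF s U I) :=
  (IsDelta0.ball hU (isDelta0_memTripleF (by omega) (by omega) (by omega))).and
    (isDelta0_allEntryF hI ((isDelta0_memTripleF (by omega) (by omega) (by omega)).and
      (.ball (by omega) (isDelta0_memTripleF (by omega) (by omega) (by omega)))))

def ψF : Fm :=
  exPairF 1 ((graphF 0).and
    ((ballF 4 (codeF 0 2 1)).and ((codesInF 4 1 0).and (ballF 4 (langF 0 3)))))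

lemma satU_ψF : SatU ψF v ↔ IsDiagram (v 0) (v 1) (v 2) := by
  simp only [ψF, satU_exPairF, satU_and, satU_graphF, satU_ballF, satU_codeF, satU_codesInF,
    satU_langF, vcons_zero, vcons_succ, IsDiagram]
  refine exists₂_congr fun U I => and_congr_right fun _ => and_congr_right fun _ => ?_
  exact ⟨fun ⟨h, h', hs⟩ => ⟨fun z => ⟨h z, h' z⟩, fun z => hs z⟩,
    fun ⟨h, hs⟩ => ⟨fun z => (h z).1, fun z => (h z).2, fun z => @hs z⟩⟩

lemma isDelta0_ψF : IsDelta0 3 ψF :=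
  isDelta0_exPairF (by omega) ((isDelta0_graphF (by omega)).and
    ((IsDelta0.ball (by omega) (isDelta0_codeF (by omega) (by omega) (by omega))).and
      ((isDelta0_codesInF (by omega) (by omega) (by omega)).and
        (.ball (by omega) (isDelta0_langF (by omega) (by omega))))))

end DiagramFormulas

section Diagram

variable {U I a b u : ZFSet}

@[simp] lemma isCode_tagged_zero : IsCode U I (tagged 0 a u) ↔ a ∈ U ∧ u = a := by
  simp [IsCode, tagged_inj]
  grind

@[simp] lemma isCode_tagged_one : IsCode U I (tagged 1 a u) ↔ ∃ b, opair a b ∈ I ∧ u ∈ b := by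
  simp [IsCode, tagged_inj]

@[simp] lemma isCode_tagged_two : IsCode U I (tagged 2 a u) ↔ (∃ b, opair a b ∈ I) ∧ u = a := by
  simp [IsCode, tagged_inj]
  grind

lemma IsGraph.eq_of_mem (hI : IsGraph I) {b' : ZFSet} (hb : opair a b ∈ I) (hb' : opair a b' ∈ I) :
    b = b' := by
  obtain ⟨a₀, b₀, e, h⟩ := hI _ hb
  obtain ⟨rfl, rfl⟩ := ZFSet.pair_inj.1 e
  exact (h a b' hb' rfl).symm

lemma IsGraph.mem_iff (hI : IsGraph I) :
    opair a b ∈ I ↔ IsCode U I (tagged 2 a a) ∧ ∀ u, u ∈ b ↔ IsCode U I (tagged 1 a u) := by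
  simp only [isCode_tagged_one, isCode_tagged_two, and_true]
  constructor
  · intro hb
    exact ⟨⟨b, hb⟩, fun u => ⟨fun hu => ⟨b, hb, hu⟩, fun ⟨b', hb', hu⟩ => hI.eq_of_mem hb hb' ▸ hu⟩⟩
  · rintro ⟨⟨b', hb'⟩, h⟩
    convert hb'
    ext u
    exact (h u).trans ⟨fun ⟨b'', hb'', hu⟩ => hI.eq_of_mem hb'' hb' ▸ hu, fun hu => ⟨b', hb', hu⟩⟩

end Diagram

lemma IsGraph.subset_of_isCode_iff {U I U' I' : ZFSet} (hI : IsGraph I) (hI' : IsGraph I')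
    (h : ∀ z, IsCode U I z ↔ IsCode U' I' z) : I ⊆ I' := by
  intro p hp
  obtain ⟨a, b, rfl, -⟩ := hI p hp
  rw [hI.mem_iff (U := U)] at hp
  rw [hI'.mem_iff (U := U')]
  simpa only [h] using hp

namespace IsDiagram

variable {t M M' s s' : ZFSet}

lemma unique (h : IsDiagram t M s) (h' : IsDiagram t M s') : s = s' := by
  obtain ⟨U, I, rfl, -, hs, -⟩ := h
  obtain ⟨U', I', e, -, hs', -⟩ := h'
  obtain ⟨rfl, rfl⟩ := ZFSet.pair_inj.1 e
  ext z
  rw [hs, hs']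

/-- The relation `IsDiagram t` is one-one: the codes determine the universe through the tag `0`,
the arguments of the graph through the tag `2` and its values through the tag `1`. -/
lemma injective (h : IsDiagram t M s) (h' : IsDiagram t M' s) : M = M' := by
  obtain ⟨U, I, rfl, hI, hs, -⟩ := h
  obtain ⟨U', I', rfl, hI', hs', -⟩ := h'
  have hcode : ∀ z, IsCode U I z ↔ IsCode U' I' z := fun z => (hs z).symm.trans (hs' z)
  have hU : U = U' := ZFSet.ext fun a => by simpa using hcode (tagged 0 a a)
  have hI : I = I' := subset_antisymm (hI.subset_of_isCode_iff hI' hcode)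
    (hI'.subset_of_isCode_iff hI fun z => (hcode z).symm)
  rw [hU, hI]

lemma subset_lang (h : IsDiagram t M s) : s ⊆ lang t :=
  let ⟨_, _, _, _, _, hs⟩ := h
  hs

end IsDiagram

/-- The paper's `Σ(𝔗, M)`, with codes in place of the true atomic sentences of `𝓛_𝔗`. -/
def diagram (t M : ZFSet) : ZFSet := ZFSet.sep (IsCode (zfst M) (zsnd M)) (lang t)

lemma isDiagram_diagram_of_isGraph {t M : ZFSet} (hM : M = opair (zfst M) (zsnd M))
    (hI : IsGraph (zsnd M))
    (hlang : ∀ z, IsCode (zfst M) (zsnd M) z → z ∈ lang t) : IsDiagram t M (diagram t M) :=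
  ⟨zfst M, zsnd M, hM, hI, fun z => ZFSet.mem_sep.trans ⟨And.right, fun h => ⟨hlang z h, h⟩⟩,
    fun _ hz => (ZFSet.mem_sep.1 hz).1⟩

/-! ### Models of TCIs -/

lemma zfst_opair (a b : ZFSet) : zfst (opair a b) = a := by
  have h : ZFSet.sInter (opair a b) = {a} := by
    ext z
    rw [ZFSet.mem_sInter ⟨{a}, by simp [opair, ZFSet.pair]⟩]
    simp only [opair, ZFSet.pair, ZFSet.mem_insert_iff, ZFSet.mem_singleton, forall_eq_or_imp,
      forall_eq]
    grind
  rw [zfst, h, ZFSet.sUnion_singleton]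

lemma IsZFunc.isGraph {f d : ZFSet} (hf : IsZFunc f d) : IsGraph f := by
  intro p hp
  obtain ⟨a, b, rfl, ha⟩ := hf.1 p hp
  refine ⟨a, b, rfl, fun a' b' hb' e => ?_⟩
  subst e
  exact (hf.2 a' ha).unique hb' hp

lemma IsZFunc.opair_iapp_mem {f d s : ZFSet} (hf : IsZFunc f d) (hs : s ∈ d) :
    opair s (iapp f s) ∈ f :=
  Classical.epsilon_spec (hf.2 s hs).exists

lemma IsZFunc.iapp_eq {f d s b : ZFSet} (hf : IsZFunc f d) (hs : s ∈ d) (hb : opair s b ∈ f) :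
    iapp f s = b :=
  (hf.2 s hs).unique (hf.opair_iapp_mem hs) hb

section Reach

variable {t c w : ZFSet} {k : ℕ}

lemma left_mem_reachSet (h : opair c w ∈ reachSet k t) : c ∈ reachSet (k + 2) t :=
  mem_reachSet_of_mem_of_mem (mem_reachSet_of_mem_of_mem h singleton_mem_opair) (by simp)

lemma right_mem_reachSet (h : opair c w ∈ reachSet k t) : w ∈ reachSet (k + 2) t :=
  mem_reachSet_of_mem_of_mem (mem_reachSet_of_mem_of_mem h pair_mem_opair) (by simp)

lemma right_mem_reachSet_of_eq (h : t = opair c w) : w ∈ reachSet 1 t :=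
  mem_reachSet_of_mem_of_mem (k := 0) (by rw [h]; exact pair_mem_opair) (by simp)

end Reach

namespace IsTCI

variable {t : ZFSet}

lemma isZFunc_theta (ht : IsTCI t) : IsZFunc (tciTheta t) (insert (tciUdot t) (tciSig t)) :=
  let ⟨_, _, _, _, _, _, h, _⟩ := ht
  h

lemma exists_theta_eq (ht : IsTCI t) {s : ZFSet} (hs : s ∈ insert (tciUdot t) (tciSig t)) :
    ∃ y i, iapp (tciTheta t) s = opair y i ∧ (i = natZ 0 ∨ i = natZ 1) :=
  let ⟨_, _, _, _, _, _, _, h, _⟩ := ht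
  let ⟨y, i, hy, hi, _⟩ := h s hs
  ⟨y, i, hy, hi⟩

lemma sig_mem_reachSet (ht : IsTCI t) : tciSig t ∈ reachSet 3 t :=
  left_mem_reachSet (right_mem_reachSet_of_eq ht.1)

lemma theta_mem_reachSet (ht : IsTCI t) : tciTheta t ∈ reachSet 5 t :=
  right_mem_reachSet (right_mem_reachSet (right_mem_reachSet_of_eq ht.1))

lemma constraint_mem_reachSet (ht : IsTCI t) {s y i : ZFSet}
    (hs : s ∈ insert (tciUdot t) (tciSig t))
    (hy : iapp (tciTheta t) s = opair y i) : y ∈ reachSet 10 t := by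
  have h := mem_reachSet_of_mem_of_mem ht.theta_mem_reachSet (ht.isZFunc_theta.opair_iapp_mem hs)
  rw [hy] at h
  exact left_mem_reachSet (right_mem_reachSet h)

end IsTCI

lemma subset_of_natZ_cases {i X Y : ZFSet} (hi : i = natZ 0 ∨ i = natZ 1)
    (h₀ : i = natZ 0 → X ⊆ Y) (h₁ : i = natZ 1 → X = Y) : X ⊆ Y :=
  hi.elim h₀ fun h => fun _ hz => h₁ h ▸ hz

lemma subset_left_of_subset_inter {X Y Z : ZFSet} (h : X ⊆ Y ∩ Z) : X ⊆ Y :=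
  fun _ hz => (ZFSet.mem_inter.1 (h hz)).1

namespace ModelsTCI

variable {M t : ZFSet}

lemma eq_opair (hM : ModelsTCI M t) : M = opair (zfst M) (zsnd M) := hM.2.1

lemma isZFunc (hM : ModelsTCI M t) : IsZFunc (zsnd M) (tciSig t) := hM.2.2.1

lemma universe_subset_reachSet (hM : ModelsTCI M t) : zfst M ⊆ reachSet 12 t := by
  obtain ⟨ht, -, -, hU, -⟩ := hM
  have hUdot := ZFSet.mem_insert (tciUdot t) (tciSig t)
  obtain ⟨y, i, hy, hi⟩ := ht.exists_theta_eq hUdot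
  have hsub : zfst M ⊆ y := subset_of_natZ_cases hi (hU y i hy).1 (hU y i hy).2
  exact fun a ha => reachSet_mono (by omega)
    (mem_reachSet_of_mem_of_mem (ht.constraint_mem_reachSet hUdot hy) (hsub ha))

lemma interp_subset_or_mem (hM : ModelsTCI M t) {s y i : ZFSet} (hs : s ∈ tciSig t)
    (hy : iapp (tciTheta t) s = opair y i) (hi : i = natZ 0 ∨ i = natZ 1) :
    iapp (zsnd M) s ⊆ y ∨ iapp (zsnd M) s ∈ y := by
  obtain ⟨⟨-, hsym, -⟩, -, -, -, hcon, -⟩ := hM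
  obtain ⟨k, _, _, hs_eq, hk, -⟩ := hsym s hs
  have hkind : symKind s = k := by rw [hs_eq]; exact zfst_opair _ _
  obtain ⟨hrel, hfun, hconst⟩ := hcon s hs y i hy
  rcases hk with rfl | rfl | rfl
  · exact .inl (subset_left_of_subset_inter
      (subset_of_natZ_cases hi (hrel hkind).1 (hrel hkind).2))
  · exact .inl (subset_left_of_subset_inter
      (subset_of_natZ_cases hi (hfun hkind).2.1 (hfun hkind).2.2))
  · exact .inr (hconst hkind).1

lemma entry_mem_reachSet (hM : ModelsTCI M t) {a b : ZFSet} (hab : opair a b ∈ zsnd M) :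
    a ∈ reachSet 12 t ∧ b ⊆ reachSet 12 t := by
  have ht : IsTCI t := hM.1
  have hI := hM.isZFunc
  obtain ⟨a', b', e, ha⟩ := hI.1 _ hab
  obtain ⟨rfl, rfl⟩ := ZFSet.pair_inj.1 e
  have hb : iapp (zsnd M) a = b := hI.iapp_eq ha hab
  have ha' := ZFSet.mem_insert_of_mem (tciUdot t) ha
  obtain ⟨y, i, hy, hi⟩ := ht.exists_theta_eq ha'
  have hyR := ht.constraint_mem_reachSet ha' hy
  refine ⟨reachSet_mono (by omega) (mem_reachSet_of_mem_of_mem ht.sig_mem_reachSet ha), ?_⟩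
  intro u hu
  rcases hb ▸ hM.interp_subset_or_mem ha hy hi with hsub | hmem
  · exact reachSet_mono (by omega) (mem_reachSet_of_mem_of_mem hyR (hsub hu))
  · exact mem_reachSet_of_mem_of_mem (mem_reachSet_of_mem_of_mem hyR hmem) hu

end ModelsTCI

lemma ModelsTCI.isDiagram_diagram {M t : ZFSet} (hM : ModelsTCI M t) :
    IsDiagram t M (diagram t M) := by
  refine isDiagram_diagram_of_isGraph hM.eq_opair hM.isZFunc.isGraph fun z hz => mem_lang.2 ?_
  have hU := hM.universe_subset_reachSet
  rcases hz with ⟨a, ha, rfl⟩ | ⟨a, b, hab, rfl | ⟨u, hu, rfl⟩⟩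
  · exact ⟨0, by omega, a, hU ha, a, hU ha, rfl⟩
  · have ha := (hM.entry_mem_reachSet hab).1
    exact ⟨2, by omega, a, ha, a, ha, rfl⟩
  · obtain ⟨ha, hb⟩ := hM.entry_mem_reachSet hab
    exact ⟨1, by omega, a, ha, u, hb hu, rfl⟩

lemma satU_φF_vtwo {t L : ZFSet} : SatU φF (vtwo t L) ↔ L = lang t := satU_φF

lemma satU_ψF_vthree {t M s : ZFSet} : SatU ψF (vthree t M s) ↔ IsDiagram t M s := satU_ψF

end SmallExt

open SmallExt in
/-- There are parameter-free formulas `φ`, `ψ` of the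
language of set theory with two and three free variables respectively, such
that `φ` defines (the map `𝔗 ↦ 𝓛_𝔗`) a function on the class of TCIs, `ψ`
defines (the map `(𝔗, M) ↦ Σ(𝔗, M)`) a function on the class of pairs
`(𝔗, M)` with `M ⊨* 𝔗`, both absolute for transitive models of ZFC, with
`R_𝔗 = {(M, x) : ψ(𝔗, M, x)}` one-one, and `ψ(𝔗, M, x)` implying `x ⊆ 𝓛`
for the `𝓛` with `φ(𝔗, 𝓛)`. -/
theorem tci_diagram_formulas :
    ∃ φ ψ : Fm, Fm.memOnly φ ∧ Fm.memOnly ψ ∧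
      Fm.paramSet φ = ∅ ∧ Fm.paramSet ψ = ∅ ∧
      Fm.free φ ⊆ {0, 1} ∧ Fm.free ψ ⊆ {0, 1, 2} ∧
      (∀ t, IsTCI t → ∃! L, SatU φ (vtwo t L)) ∧
      (∀ t M, IsTCI t → ModelsTCI M t → ∃! s, SatU ψ (vthree t M s)) ∧
      (∀ W, IsTransModel W → ∀ a b, a ∈ W → b ∈ W →
        (SatV W φ (vtwo a b) ↔ SatU φ (vtwo a b))) ∧
      (∀ W, IsTransModel W → ∀ a b c, a ∈ W → b ∈ W → c ∈ W →
        (SatV W ψ (vthree a b c) ↔ SatU ψ (vthree a b c))) ∧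
      (∀ t, IsTCI t → ∀ M M' s, SatU ψ (vthree t M s) → SatU ψ (vthree t M' s) → M = M') ∧
      (∀ t M s, SatU ψ (vthree t M s) → ∃ L, SatU φ (vtwo t L) ∧ s ⊆ L) := by
  refine ⟨φF, ψF, isDelta0_φF.memOnly, isDelta0_ψF.memOnly, isDelta0_φF.paramSet_eq_empty,
    isDelta0_ψF.paramSet_eq_empty, fun m hm => ?_, fun m hm => ?_, fun t _ => ?_,
    fun t M _ hM => ?_, fun W hW a b ha hb => ?_, fun W hW a b c ha hb hc => ?_,
    fun t _ M M' s h h' => ?_, fun t M s h => ?_⟩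
  · have := isDelta0_φF.lt_of_mem_free hm
    interval_cases m <;> simp
  · have := isDelta0_ψF.lt_of_mem_free hm
    interval_cases m <;> simp
  · exact ⟨lang t, satU_φF_vtwo.2 rfl, fun L h => satU_φF_vtwo.1 h⟩
  · exact ⟨diagram t M, satU_ψF_vthree.2 hM.isDiagram_diagram,
      fun s h => (satU_ψF_vthree.1 h).unique hM.isDiagram_diagram⟩
  · refine isDelta0_φF.satV_iff_satU hW.1 fun m hm => ?_
    interval_cases m <;> simpa [vtwo]
  · refine isDelta0_ψF.satV_iff_satU hW.1 fun m hm => ?_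
    interval_cases m <;> simpa [vthree]
  · exact (satU_ψF_vthree.1 h).injective (satU_ψF_vthree.1 h')
  · exact ⟨lang t, satU_φF_vtwo.2 rfl, (satU_ψF_vthree.1 h).subset_lang⟩
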